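/- arXiv:1207.0787 — 11 statements merged into one kernel-verified Lean document; each statement's English description precedes it below -/
import Mathlib

section
/- Let n ≥ 1, let a_1,…,a_n, z_0, z denote pairwise distinct complex variables ranging over an open set, and let A_1,…,A_n be C¹ traceless 2×2 complex-matrix-valued functions of (a_1,…,a_n,z_0). Set 𝒜(z) = Σ_{ν=1}^n A_ν/(z−a_ν) and Δ_ν = (1/2)·tr(A_ν²). Suppose Φ, a C² 2×2-matrix-valued function of (z,z_0,a_1,…,a_n), satisfies ∂_zΦ = 𝒜(z)Φ, ∂_{a_ν}Φ = −((z_0−z)/(z_0−a_ν))·(A_ν/(z−a_ν))·Φ for each ν, and ∂_{z_0}Φ = −𝒜(z_0)Φ; suppose τ is a nonvanishing C¹ function of (a_1,…,a_n,z_0) with ∂_{a_μ}τ/τ = Σ_{ν≠μ} tr(A_μA_ν)/(a_μ−a_ν) for each μ and ∂_{z_0}τ = 0; and suppose w is a C¹ scalar function of (z,z_0) with w(z,z_0)²·(z−z_0) = 1 and ∂_z w = −w/(2(z−z_0)), ∂_{z_0}w = w/(2(z−z_0)). Then the matrix function 𝒫 = w·τ·Φ satisfies the second-order PDE ∂_z∂_z𝒫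 = (z−z_0)^{−1}·∂_{z_0}𝒫 + (4(z−z_0)²)^{−1}·𝒫 + Σ_{ν=1}^n [ (z−a_ν)^{−1}·∂_{a_ν}𝒫 + Δ_ν·(z−a_ν)^{−2}·𝒫 ]. -/
open Finset Matrix

attribute [local instance] Matrix.normedAddCommGroup Matrix.normedSpace

noncomputable section

/-- Points of the deformation space: `p = (z, z₀, a)` with `a = (a_1, …, a_n)`. -/
abbrev Dom (n : ℕ) := ℂ × ℂ × (Fin n → ℂ)

/-- Directional (partial) derivative of a function on the deformation space. -/
noncomputable def pd {n : ℕ} {E : Type*} [NormedAddCommGroup E] [NormedSpace ℂ E]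
    (F : Dom n → E) (v : Dom n) (p : Dom n) : E :=
  fderiv ℂ F p v

/-- Direction of `∂_z`. -/
def dz (n : ℕ) : Dom n := (1, 0, 0)

/-- Direction of `∂_{z₀}`. -/
def dz0 (n : ℕ) : Dom n := (0, 1, 0)

/-- Direction of `∂_{a_ν}`. -/
def da (n : ℕ) (ν : Fin n) : Dom n := (0, 0, Pi.single ν 1)

/-!
Every first derivative of `𝒫 = wτΦ` is a matrix times `𝒫`: `∂_z𝒫 = B𝒫` with
`B = 𝒜(z) - 1/(2(z - z₀))`, `∂_{z₀}𝒫 = (1/(2(z - z₀)) - 𝒜(z₀))𝒫` and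
`∂_{a_ν}𝒫 = (H_ν - c_ν A_ν)𝒫` with `H_ν = ∂_{a_ν} log τ`. Hence `∂_z²𝒫 = (∂_zB + B²)𝒫`, and the
equation becomes an identity between matrices. As `𝒜(z)` is a traceless `2 × 2` matrix,
`𝒜(z)² = ½ tr 𝒜(z)²`, which partial fractions turn into `∑_ν (Δ_ν/(z - a_ν)² + H_ν/(z - a_ν))`;
the terms linear in the `A_ν` cancel by
`1/(z - a)² + 1/((z - z₀)(z - a)) = 1/((z - z₀)(z₀ - a)) - (z - z₀)/((z₀ - a)(z - a)²)`.
-/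

open Filter Topology

section FuchsianAlgebra

variable {K : Type*} [Field K] {ι : Type*} [Fintype ι]

theorem Matrix.mul_self_eq_smul_one_of_trace_eq_zero [CharZero K] {A : Matrix (Fin 2) (Fin 2) K}
    (h : A.trace = 0) : A * A = (1 / 2 * (A * A).trace) • (1 : Matrix (Fin 2) (Fin 2) K) := by
  rw [Matrix.trace_fin_two] at h ⊢
  ext i j
  fin_cases i <;> fin_cases j <;> simp [Matrix.mul_apply, Fin.sum_univ_two]
  · linear_combination (A 0 0 - A 1 1) / 2 * h
  · linear_combination A 0 1 * h
  · linear_combination A 1 0 * h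
  · linear_combination (A 1 1 - A 0 0) / 2 * h

theorem Finset.sum_sum_erase_comm [DecidableEq ι] {M : Type*} [AddCommMonoid M]
    (f : ι → ι → M) : ∑ ν, ∑ μ ∈ univ.erase ν, f ν μ = ∑ ν, ∑ μ ∈ univ.erase ν, f μ ν :=
  Finset.sum_comm' fun _ _ => by simp only [mem_erase, mem_univ, and_true]; tauto

theorem half_sum_sum_inv_mul_inv_mul [CharZero K] [DecidableEq ι] {t : ι → ι → K}
    (ht : ∀ ν μ, t ν μ = t μ ν) {a : ι → K} (ha : Function.Injective a) {z : K}
    (hz : ∀ ν, z ≠ a ν) :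
    1 / 2 * ∑ ν, ∑ μ, (z - a ν)⁻¹ * (z - a μ)⁻¹ * t ν μ
      = ∑ ν, (1 / 2 * t ν ν / (z - a ν) ^ 2
          + (∑ μ ∈ univ.erase ν, t ν μ / (a ν - a μ)) / (z - a ν)) := by
  set g : ι → ι → K := fun ν μ => t ν μ / (a ν - a μ) / (z - a ν)
  have hpair : ∀ ν, ∀ μ ∈ univ.erase ν, (z - a ν)⁻¹ * (z - a μ)⁻¹ * t ν μ = g μ ν + g ν μ := by
    intro ν μ hμ
    have h₁ := sub_ne_zero.2 (hz ν)
    have h₂ := sub_ne_zero.2 (hz μ)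
    have h₃ := sub_ne_zero.2 (ha.ne (mem_erase.1 hμ).1)
    have h₄ := sub_ne_zero.2 (ha.ne (mem_erase.1 hμ).1.symm)
    simp only [g, ht μ ν]
    field_simp
    ring
  have hoff : ∑ ν, ∑ μ ∈ univ.erase ν, (z - a ν)⁻¹ * (z - a μ)⁻¹ * t ν μ
      = 2 * ∑ ν, ∑ μ ∈ univ.erase ν, g ν μ := by
    rw [two_mul]
    nth_rw 2 [Finset.sum_sum_erase_comm]
    simp only [← sum_add_distrib]
    exact sum_congr rfl fun ν _ => sum_congr rfl (hpair ν)
  have hdiag : ∀ ν, ∑ μ, (z - a ν)⁻¹ * (z - a μ)⁻¹ * t ν μ = t ν ν / (z - a ν) ^ 2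
      + ∑ μ ∈ univ.erase ν, (z - a ν)⁻¹ * (z - a μ)⁻¹ * t ν μ := fun ν => by
    rw [← add_sum_erase _ _ (mem_univ ν), div_eq_mul_inv, ← inv_pow]
    ring
  rw [sum_congr rfl fun ν _ => hdiag ν, sum_add_distrib, hoff, mul_add, mul_sum, ← mul_assoc,
    one_div, inv_mul_cancel₀ two_ne_zero, one_mul, sum_add_distrib]
  congr 1
  · exact sum_congr rfl fun ν _ => (mul_div_assoc _ _ _).symm
  · simp only [g, sum_div]

def fuchsian {M : Type*} [AddCommMonoid M] [Module K M] (A : ι → M) (a : ι → K) (z : K) : M :=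
  ∑ ν, (z - a ν)⁻¹ • A ν

theorem trace_fuchsian_eq_zero {m : Type*} [Fintype m] {A : ι → Matrix m m K}
    (htr : ∀ ν, (A ν).trace = 0) (a : ι → K) (z : K) : (fuchsian A a z).trace = 0 := by
  simp [fuchsian, Matrix.trace_sum, htr]

theorem fuchsian_mul_self [CharZero K] [DecidableEq ι] {A : ι → Matrix (Fin 2) (Fin 2) K}
    (htr : ∀ ν, (A ν).trace = 0) {a : ι → K} (ha : Function.Injective a) {z : K}
    (hz : ∀ ν, z ≠ a ν) :
    fuchsian A a z * fuchsian A a z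
      = (∑ ν, (1 / 2 * (A ν * A ν).trace / (z - a ν) ^ 2
          + (∑ μ ∈ univ.erase ν, (A ν * A μ).trace / (a ν - a μ)) / (z - a ν))) • 1 := by
  rw [Matrix.mul_self_eq_smul_one_of_trace_eq_zero (trace_fuchsian_eq_zero htr a z),
    ← half_sum_sum_inv_mul_inv_mul (fun ν μ => Matrix.trace_mul_comm (A ν) (A μ)) ha hz]
  congr 3
  simp only [fuchsian, sum_mul_sum, smul_mul_smul_comm, Matrix.trace_sum, Matrix.trace_smul,
    smul_eq_mul]

theorem second_order_matrix_identity [CharZero K] [DecidableEq ι]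
    {A : ι → Matrix (Fin 2) (Fin 2) K} (htr : ∀ ν, (A ν).trace = 0) {a : ι → K}
    (ha : Function.Injective a) {z z₀ : K} (hzz₀ : z ≠ z₀) (hz : ∀ ν, z ≠ a ν)
    (hz₀ : ∀ ν, z₀ ≠ a ν) :
    (-∑ ν, ((z - a ν) ^ 2)⁻¹ • A ν + (2 * (z - z₀) ^ 2)⁻¹ • 1)
        + (fuchsian A a z - (2 * (z - z₀))⁻¹ • 1) * (fuchsian A a z - (2 * (z - z₀))⁻¹ • 1)
      = (z - z₀)⁻¹ • ((2 * (z - z₀))⁻¹ • 1 + -fuchsian A a z₀) + (4 * (z - z₀) ^ 2)⁻¹ • 1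
        + ∑ ν, ((z - a ν)⁻¹ • ((∑ μ ∈ univ.erase ν, (A ν * A μ).trace / (a ν - a μ)) • 1
              + (-((z₀ - z) / ((z₀ - a ν) * (z - a ν)))) • A ν)
            + (1 / 2 * (A ν * A ν).trace / (z - a ν) ^ 2) • 1) := by
  have hpoles : ∑ ν, ((z - a ν)⁻¹ * -((z₀ - z) / ((z₀ - a ν) * (z - a ν)))) • A ν
      = (z - z₀)⁻¹ • fuchsian A a z₀ - (z - z₀)⁻¹ • fuchsian A a z
        - ∑ ν, ((z - a ν) ^ 2)⁻¹ • A ν := by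
    simp only [fuchsian, smul_sum, ← sum_sub_distrib, smul_smul, ← sub_smul]
    refine sum_congr rfl fun ν _ => ?_
    have h₁ := sub_ne_zero.2 hzz₀
    have h₂ := sub_ne_zero.2 (hz ν)
    have h₃ := sub_ne_zero.2 (hz₀ ν)
    congr 1
    field_simp
    ring
  have hsplit : ∑ ν, ((z - a ν)⁻¹ • ((∑ μ ∈ univ.erase ν, (A ν * A μ).trace / (a ν - a μ)) • 1
              + (-((z₀ - z) / ((z₀ - a ν) * (z - a ν)))) • A ν)
            + (1 / 2 * (A ν * A ν).trace / (z - a ν) ^ 2) • (1 : Matrix (Fin 2) (Fin 2) K))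
      = (∑ ν, (1 / 2 * (A ν * A ν).trace / (z - a ν) ^ 2
          + (∑ μ ∈ univ.erase ν, (A ν * A μ).trace / (a ν - a μ)) / (z - a ν))) • 1
        + ∑ ν, ((z - a ν)⁻¹ * -((z₀ - z) / ((z₀ - a ν) * (z - a ν)))) • A ν := by
    rw [sum_smul, ← sum_add_distrib]
    exact sum_congr rfl fun ν _ => by module
  have hsq : (fuchsian A a z - (2 * (z - z₀))⁻¹ • 1) * (fuchsian A a z - (2 * (z - z₀))⁻¹ • 1)
      = fuchsian A a z * fuchsian A a z - (2 * (2 * (z - z₀))⁻¹) • fuchsian A a z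
        + ((2 * (z - z₀))⁻¹ * (2 * (z - z₀))⁻¹) • 1 := by
    simp only [sub_mul, mul_sub, smul_mul_assoc, mul_smul_comm, one_mul, mul_one]
    module
  rw [hsplit, hpoles, hsq, fuchsian_mul_self htr ha hz]
  generalize z - z₀ = X
  module

end FuchsianAlgebra

section DirectionalDerivative

variable {n : ℕ} {E : Type*} [NormedAddCommGroup E] [NormedSpace ℂ E] {p : Dom n} (v : Dom n)

theorem pd_congr {f g : Dom n → E} (h : f =ᶠ[𝓝 p] g) : pd f v p = pd g v p := by
  rw [pd, pd, h.fderiv_eq]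

theorem pd_const (c : E) : pd (fun _ => c) v p = 0 := by
  simp [pd]

theorem pd_sub {f g : Dom n → E} (hf : DifferentiableAt ℂ f p) (hg : DifferentiableAt ℂ g p) :
    pd (fun q => f q - g q) v p = pd f v p - pd g v p := by
  simp [pd, fderiv_fun_sub hf hg]

theorem pd_sum {ι : Type*} (s : Finset ι) {f : ι → Dom n → E}
    (hf : ∀ i ∈ s, DifferentiableAt ℂ (f i) p) :
    pd (fun q => ∑ i ∈ s, f i q) v p = ∑ i ∈ s, pd (f i) v p := by
  simp [pd, fderiv_fun_sum hf]

theorem pd_smul {c : Dom n → ℂ} {f : Dom n → E} (hc : DifferentiableAt ℂ c p)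
    (hf : DifferentiableAt ℂ f p) :
    pd (fun q => c q • f q) v p = pd c v p • f p + c p • pd f v p := by
  simp [pd, fderiv_fun_smul hc hf, add_comm]

theorem pd_mul {f g : Dom n → ℂ} (hf : DifferentiableAt ℂ f p) (hg : DifferentiableAt ℂ g p) :
    pd (fun q => f q * g q) v p = pd f v p * g p + f p * pd g v p :=
  pd_smul v hf hg

theorem pd_inv_clm (ℓ : Dom n →L[ℂ] ℂ) (h : ℓ p ≠ 0) :
    pd (fun q => (ℓ q)⁻¹) v p = -ℓ v / ℓ p ^ 2 := by
  have := ((hasFDerivAt_inv h).comp p ℓ.hasFDerivAt).fderiv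
  simp only [Function.comp_def] at this
  simp [pd, this, div_eq_mul_inv, mul_comm]

end DirectionalDerivative

section MatrixDirectionalDerivative

variable {m : Type*} [Fintype m] [DecidableEq m] {n : ℕ} {p : Dom n} (v : Dom n)

def Matrix.mulCLM : Matrix m m ℂ →L[ℂ] Matrix m m ℂ →L[ℂ] Matrix m m ℂ :=
  LinearMap.toContinuousLinearMap
    (LinearMap.toContinuousLinearMap.toLinearMap ∘ₗ LinearMap.mul ℂ (Matrix m m ℂ))

theorem pd_matrix_mul {F G : Dom n → Matrix m m ℂ} (hF : DifferentiableAt ℂ F p)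
    (hG : DifferentiableAt ℂ G p) :
    pd (fun q => F q * G q) v p = pd F v p * G p + F p * pd G v p :=
  (congrArg (· v) (Matrix.mulCLM.fderiv_of_bilinear hF hG)).trans (by simp [pd, add_comm]; rfl)

theorem pd_pd_of_eventually_pd_eq_mul {F B : Dom n → Matrix m m ℂ} (hF : DifferentiableAt ℂ F p)
    (hB : DifferentiableAt ℂ B p) (h : ∀ᶠ q in 𝓝 p, pd F v q = B q * F q) :
    pd (pd F v) v p = (pd B v p + B p * B p) * F p := by
  rw [pd_congr v h, pd_matrix_mul v hB hF, h.self_of_nhds, add_mul, mul_assoc]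

theorem pd_smul_eq_mul {s : Dom n → ℂ} {Φ : Dom n → Matrix m m ℂ} {c : ℂ} {M : Matrix m m ℂ}
    (hs : DifferentiableAt ℂ s p) (hΦ : DifferentiableAt ℂ Φ p) (hsc : pd s v p = c * s p)
    (hΦM : pd Φ v p = M * Φ p) :
    pd (fun q => s q • Φ q) v p = (c • 1 + M) * (s p • Φ p) := by
  rw [pd_smul v hs hΦ, hsc, hΦM, add_mul, smul_one_mul, mul_smul_comm, smul_smul]

end MatrixDirectionalDerivative

section DeformationSpace

variable {n : ℕ} {E : Type*} [NormedAddCommGroup E] [NormedSpace ℂ E] {p : Dom n}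

theorem pd_dz_inv_sub_pole (ν : Fin n) (h : p.1 ≠ p.2.2 ν) :
    pd (fun q : Dom n => (q.1 - q.2.2 ν)⁻¹) (dz n) p = -((p.1 - p.2.2 ν) ^ 2)⁻¹ := by
  refine (pd_inv_clm (dz n) (ContinuousLinearMap.fst ℂ ℂ (ℂ × (Fin n → ℂ)) -
    (ContinuousLinearMap.proj ν).comp ((ContinuousLinearMap.snd ℂ ℂ (Fin n → ℂ)).comp
      (ContinuousLinearMap.snd ℂ ℂ (ℂ × (Fin n → ℂ))))) (sub_ne_zero.2 h)).trans ?_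
  simp [dz, div_eq_mul_inv]

theorem pd_dz_inv_two_mul_sub_base (h : p.1 ≠ p.2.1) :
    pd (fun q : Dom n => (2 * (q.1 - q.2.1))⁻¹) (dz n) p = -(2 * (p.1 - p.2.1) ^ 2)⁻¹ := by
  refine (pd_inv_clm (dz n) ((2 : ℂ) • (ContinuousLinearMap.fst ℂ ℂ (ℂ × (Fin n → ℂ)) -
    (ContinuousLinearMap.fst ℂ ℂ (Fin n → ℂ)).comp (ContinuousLinearMap.snd ℂ ℂ (ℂ × (Fin n → ℂ)))))
    (mul_ne_zero two_ne_zero (sub_ne_zero.2 h))).trans ?_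
  have := sub_ne_zero.2 h
  simp [dz]
  field_simp

theorem differentiableAt_inv_two_mul_sub_base (h : p.1 ≠ p.2.1) :
    DifferentiableAt ℂ (fun q : Dom n => (2 * (q.1 - q.2.1))⁻¹) p := by
  have := mul_ne_zero two_ne_zero (sub_ne_zero.2 h)
  fun_prop (disch := assumption)

theorem differentiableAt_fuchsian {A : Fin n → Dom n → E} (hA : ∀ ν, DifferentiableAt ℂ (A ν) p)
    (hz : ∀ ν, p.1 ≠ p.2.2 ν) :
    DifferentiableAt ℂ (fun q => fuchsian (fun ν => A ν q) q.2.2 q.1) p := by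
  have := fun ν => sub_ne_zero.2 (hz ν)
  unfold fuchsian
  fun_prop (disch := simp_all)

theorem pd_dz_fuchsian {A : Fin n → Dom n → E} (hA : ∀ ν, DifferentiableAt ℂ (A ν) p)
    (hAz : ∀ ν, pd (A ν) (dz n) p = 0) (hz : ∀ ν, p.1 ≠ p.2.2 ν) :
    pd (fun q => fuchsian (fun ν => A ν q) q.2.2 q.1) (dz n) p
      = -∑ ν, ((p.1 - p.2.2 ν) ^ 2)⁻¹ • A ν p := by
  have hpole : ∀ ν, DifferentiableAt ℂ (fun q : Dom n => (q.1 - q.2.2 ν)⁻¹) p := fun ν => by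
    have := sub_ne_zero.2 (hz ν)
    fun_prop (disch := assumption)
  simp only [fuchsian]
  rw [pd_sum (f := fun ν q => (q.1 - q.2.2 ν)⁻¹ • A ν q) _ _ fun ν _ => (hpole ν).smul (hA ν),
    ← sum_neg_distrib]
  refine sum_congr rfl fun ν _ => ?_
  rw [pd_smul _ (hpole ν) (hA ν), pd_dz_inv_sub_pole ν (hz ν), hAz ν, smul_zero, add_zero, neg_smul]

theorem pd_dz_fuchsian_sub_smul {A : Fin n → Dom n → E} (hA : ∀ ν, DifferentiableAt ℂ (A ν) p)
    (hAz : ∀ ν, pd (A ν) (dz n) p = 0) (hz : ∀ ν, p.1 ≠ p.2.2 ν) (hzz₀ : p.1 ≠ p.2.1) (c : E) :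
    pd (fun q => fuchsian (fun ν => A ν q) q.2.2 q.1 - (2 * (q.1 - q.2.1))⁻¹ • c) (dz n) p
      = -∑ ν, ((p.1 - p.2.2 ν) ^ 2)⁻¹ • A ν p + (2 * (p.1 - p.2.1) ^ 2)⁻¹ • c := by
  have hbase := differentiableAt_inv_two_mul_sub_base hzz₀
  rw [pd_sub _ (differentiableAt_fuchsian hA hz) (hbase.smul_const c), pd_dz_fuchsian hA hAz hz,
    pd_smul _ hbase (differentiableAt_const c), pd_const, pd_dz_inv_two_mul_sub_base hzz₀]
  simp [sub_eq_add_neg]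

theorem pd_dz_pd_dz_eq_of_logDeriv {A : Fin n → Dom n → Matrix (Fin 2) (Fin 2) ℂ}
    {F : Dom n → Matrix (Fin 2) (Fin 2) ℂ} (hA : ∀ ν, DifferentiableAt ℂ (A ν) p)
    (hAz : ∀ ν, pd (A ν) (dz n) p = 0) (htr : ∀ ν, (A ν p).trace = 0) (hzz₀ : p.1 ≠ p.2.1)
    (hz : ∀ ν, p.1 ≠ p.2.2 ν) (hz₀ : ∀ ν, p.2.1 ≠ p.2.2 ν) (ha : Function.Injective p.2.2)
    (hF : DifferentiableAt ℂ F p)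
    (hFz : ∀ᶠ q in 𝓝 p, pd F (dz n) q
      = (fuchsian (fun ν => A ν q) q.2.2 q.1 - (2 * (q.1 - q.2.1))⁻¹ • 1) * F q)
    (hFz₀ : pd F (dz0 n) p
      = ((2 * (p.1 - p.2.1))⁻¹ • 1 + -fuchsian (fun ν => A ν p) p.2.2 p.2.1) * F p)
    (hFa : ∀ ν, pd F (da n ν) p
      = ((∑ μ ∈ univ.erase ν, (A ν p * A μ p).trace / (p.2.2 ν - p.2.2 μ)) • 1
          + (-((p.2.1 - p.1) / ((p.2.1 - p.2.2 ν) * (p.1 - p.2.2 ν)))) • A ν p) * F p) :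
    pd (pd F (dz n)) (dz n) p
      = (p.1 - p.2.1)⁻¹ • pd F (dz0 n) p + (4 * (p.1 - p.2.1) ^ 2)⁻¹ • F p
        + ∑ ν, ((p.1 - p.2.2 ν)⁻¹ • pd F (da n ν) p
          + ((1 / 2 * (A ν p * A ν p).trace) / (p.1 - p.2.2 ν) ^ 2) • F p) := by
  have hB : DifferentiableAt ℂ (fun q => fuchsian (fun ν => A ν q) q.2.2 q.1
      - (2 * (q.1 - q.2.1))⁻¹ • (1 : Matrix (Fin 2) (Fin 2) ℂ)) p :=
    (differentiableAt_fuchsian hA hz).sub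
      ((differentiableAt_inv_two_mul_sub_base hzz₀).smul_const 1)
  rw [pd_pd_of_eventually_pd_eq_mul _ hF hB hFz, pd_dz_fuchsian_sub_smul hA hAz hz hzz₀,
    second_order_matrix_identity htr ha hzz₀ hz hz₀, hFz₀]
  simp only [hFa, add_mul, sum_mul, smul_mul_assoc, one_mul]

end DeformationSpace

theorem P_second_order_pde_general (n : ℕ)
    (U : Set (Dom n)) (hU : IsOpen U)
    (hdist : ∀ p ∈ U, p.1 ≠ p.2.1 ∧ (∀ ν, p.1 ≠ p.2.2 ν) ∧ (∀ ν, p.2.1 ≠ p.2.2 ν) ∧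
      ∀ μ ν : Fin n, μ ≠ ν → p.2.2 μ ≠ p.2.2 ν)
    -- the matrices A_ν : C¹ traceless functions of (a, z₀), i.e. independent of z
    (A : Fin n → Dom n → Matrix (Fin 2) (Fin 2) ℂ)
    (hA : ∀ ν, DifferentiableOn ℂ (A ν) U)
    (hAz : ∀ ν, ∀ p ∈ U, pd (A ν) (dz n) p = 0)
    (hAtr : ∀ ν, ∀ p ∈ U, (A ν p).trace = 0)
    -- the fundamental solution Φ: C², satisfying the linear system and the
    -- isomonodromic deformation equations
    (Φ : Dom n → Matrix (Fin 2) (Fin 2) ℂ)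
    (hΦ : ContDiffOn ℂ 2 Φ U)
    (hΦz : ∀ p ∈ U, pd Φ (dz n) p = (∑ ν, (p.1 - p.2.2 ν)⁻¹ • A ν p) * Φ p)
    (hΦa : ∀ ν : Fin n, ∀ p ∈ U, pd Φ (da n ν) p =
      (-((p.2.1 - p.1) / ((p.2.1 - p.2.2 ν) * (p.1 - p.2.2 ν)))) • (A ν p * Φ p))
    (hΦz0 : ∀ p ∈ U, pd Φ (dz0 n) p = -((∑ ν, (p.2.1 - p.2.2 ν)⁻¹ • A ν p) * Φ p))
    -- the tau function: nonvanishing, C¹, independent of z, with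
    -- ∂_{a_μ}τ/τ = ∑_{ν≠μ} tr(A_μA_ν)/(a_μ−a_ν) and ∂_{z₀}τ = 0
    (T : Dom n → ℂ)
    (hT : DifferentiableOn ℂ T U)
    (hTne : ∀ p ∈ U, T p ≠ 0)
    (hTz : ∀ p ∈ U, pd T (dz n) p = 0)
    (hTz0 : ∀ p ∈ U, pd T (dz0 n) p = 0)
    (hTa : ∀ μ : Fin n, ∀ p ∈ U, pd T (da n μ) p / T p =
      ∑ ν ∈ univ.erase μ, (A μ p * A ν p).trace / (p.2.2 μ - p.2.2 ν))
    -- the scalar w: C¹ function of (z, z₀) with w²(z−z₀) = 1,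
    -- ∂_z w = −w/(2(z−z₀)), ∂_{z₀} w = w/(2(z−z₀))
    (W : Dom n → ℂ)
    (hW : DifferentiableOn ℂ W U)
    (hWa : ∀ ν : Fin n, ∀ p ∈ U, pd W (da n ν) p = 0)
    (hWz : ∀ p ∈ U, pd W (dz n) p = -(W p / (2 * (p.1 - p.2.1))))
    (hWz0 : ∀ p ∈ U, pd W (dz0 n) p = W p / (2 * (p.1 - p.2.1))) :
    ∀ p ∈ U,
      pd (pd (fun q => (W q * T q) • Φ q) (dz n)) (dz n) p =
        (p.1 - p.2.1)⁻¹ • pd (fun q => (W q * T q) • Φ q) (dz0 n) p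
          + (4 * (p.1 - p.2.1) ^ 2)⁻¹ • ((W p * T p) • Φ p)
          + ∑ ν, ((p.1 - p.2.2 ν)⁻¹ • pd (fun q => (W q * T q) • Φ q) (da n ν) p
              + ((1 / 2 * (A ν p * A ν p).trace) / (p.1 - p.2.2 ν) ^ 2) • ((W p * T p) • Φ p)) := by
  intro p hp
  obtain ⟨hzz₀, hza, hz₀a, ha⟩ := hdist p hp
  have hd : ∀ {f : Dom n → ℂ}, DifferentiableOn ℂ f U → ∀ q ∈ U, DifferentiableAt ℂ f q :=
    fun hf q hq => hf.differentiableAt (hU.mem_nhds hq)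
  have hΦd : ∀ q ∈ U, DifferentiableAt ℂ Φ q := fun q hq =>
    (hΦ.differentiableOn (by norm_num)).differentiableAt (hU.mem_nhds hq)
  have hWTd : ∀ q ∈ U, DifferentiableAt ℂ (fun q => W q * T q) q :=
    fun q hq => (hd hW q hq).mul (hd hT q hq)
  refine pd_dz_pd_dz_eq_of_logDeriv (fun ν => (hA ν).differentiableAt (hU.mem_nhds hp))
    (fun ν => hAz ν p hp) (fun ν => hAtr ν p hp) hzz₀ hza hz₀a
    (fun μ ν => not_imp_not.1 (ha μ ν)) ((hWTd p hp).smul (hΦd p hp)) ?_ ?_ fun ν => ?_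
  · filter_upwards [hU.mem_nhds hp] with q hq
    rw [pd_smul_eq_mul _ (hWTd q hq) (hΦd q hq) (c := -(2 * (q.1 - q.2.1))⁻¹) ?_ (hΦz q hq),
      neg_smul, neg_add_eq_sub]
    · rfl
    · rw [pd_mul _ (hd hW q hq) (hd hT q hq), hWz q hq, hTz q hq]
      ring
  · refine pd_smul_eq_mul _ (hWTd p hp) (hΦd p hp) ?_ ((hΦz0 p hp).trans (neg_mul _ _).symm)
    rw [pd_mul _ (hd hW p hp) (hd hT p hp), hWz0 p hp, hTz0 p hp]
    ring
  · refine pd_smul_eq_mul _ (hWTd p hp) (hΦd p hp) ?_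
      ((hΦa ν p hp).trans (smul_mul_assoc _ _ _).symm)
    rw [pd_mul _ (hd hW p hp) (hd hT p hp), hWa ν p hp, (div_eq_iff (hTne p hp)).1 (hTa ν p hp)]
    ring

/-- first half of the Proposition in Subsection 2.3: with `𝒫 = w·τ·Φ`,
where `Φ` solves the rank-2 traceless Fuchsian system together with its isomonodromic
deformation equations in `a_ν` and `z₀`, `τ` is the isomonodromic tau function, and
`w(z,z₀)² (z−z₀) = 1`, the matrix `𝒫` satisfies
`∂_z∂_z𝒫 = (z−z₀)⁻¹ ∂_{z₀}𝒫 + (4(z−z₀)²)⁻¹ 𝒫 + ∑_ν [(z−a_ν)⁻¹ ∂_{a_ν}𝒫 + Δ_ν (z−a_ν)⁻² 𝒫]`. -/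
theorem P_second_order_pde (n : ℕ) (hn : 1 ≤ n)
    (U : Set (Dom n)) (hU : IsOpen U)
    (hdist : ∀ p ∈ U, p.1 ≠ p.2.1 ∧ (∀ ν, p.1 ≠ p.2.2 ν) ∧ (∀ ν, p.2.1 ≠ p.2.2 ν) ∧
      ∀ μ ν : Fin n, μ ≠ ν → p.2.2 μ ≠ p.2.2 ν)
    -- the matrices A_ν : C¹ traceless functions of (a, z₀), i.e. independent of z
    (A : Fin n → Dom n → Matrix (Fin 2) (Fin 2) ℂ)
    (hA : ∀ ν, DifferentiableOn ℂ (A ν) U)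
    (hAz : ∀ ν, ∀ p ∈ U, pd (A ν) (dz n) p = 0)
    (hAtr : ∀ ν, ∀ p ∈ U, (A ν p).trace = 0)
    -- the fundamental solution Φ: C², satisfying the linear system and the
    -- isomonodromic deformation equations
    (Φ : Dom n → Matrix (Fin 2) (Fin 2) ℂ)
    (hΦ : ContDiffOn ℂ 2 Φ U)
    (hΦz : ∀ p ∈ U, pd Φ (dz n) p = (∑ ν, (p.1 - p.2.2 ν)⁻¹ • A ν p) * Φ p)
    (hΦa : ∀ ν : Fin n, ∀ p ∈ U, pd Φ (da n ν) p =
      (-((p.2.1 - p.1) / ((p.2.1 - p.2.2 ν) * (p.1 - p.2.2 ν)))) • (A ν p * Φ p))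
    (hΦz0 : ∀ p ∈ U, pd Φ (dz0 n) p = -((∑ ν, (p.2.1 - p.2.2 ν)⁻¹ • A ν p) * Φ p))
    -- the tau function: nonvanishing, C¹, independent of z, with
    -- ∂_{a_μ}τ/τ = ∑_{ν≠μ} tr(A_μA_ν)/(a_μ−a_ν) and ∂_{z₀}τ = 0
    (T : Dom n → ℂ)
    (hT : DifferentiableOn ℂ T U)
    (hTne : ∀ p ∈ U, T p ≠ 0)
    (hTz : ∀ p ∈ U, pd T (dz n) p = 0)
    (hTz0 : ∀ p ∈ U, pd T (dz0 n) p = 0)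
    (hTa : ∀ μ : Fin n, ∀ p ∈ U, pd T (da n μ) p / T p =
      ∑ ν ∈ univ.erase μ, (A μ p * A ν p).trace / (p.2.2 μ - p.2.2 ν))
    -- the scalar w: C¹ function of (z, z₀) with w²(z−z₀) = 1,
    -- ∂_z w = −w/(2(z−z₀)), ∂_{z₀} w = w/(2(z−z₀))
    (W : Dom n → ℂ)
    (hW : DifferentiableOn ℂ W U)
    (hWa : ∀ ν : Fin n, ∀ p ∈ U, pd W (da n ν) p = 0)
    (hWsq : ∀ p ∈ U, W p ^ 2 * (p.1 - p.2.1) = 1)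
    (hWz : ∀ p ∈ U, pd W (dz n) p = -(W p / (2 * (p.1 - p.2.1))))
    (hWz0 : ∀ p ∈ U, pd W (dz0 n) p = W p / (2 * (p.1 - p.2.1))) :
    ∀ p ∈ U,
      pd (pd (fun q => (W q * T q) • Φ q) (dz n)) (dz n) p =
        (p.1 - p.2.1)⁻¹ • pd (fun q => (W q * T q) • Φ q) (dz0 n) p
          + (4 * (p.1 - p.2.1) ^ 2)⁻¹ • ((W p * T p) • Φ p)
          + ∑ ν, ((p.1 - p.2.2 ν)⁻¹ • pd (fun q => (W q * T q) • Φ q) (da n ν) p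
              + ((1 / 2 * (A ν p * A ν p).trace) / (p.1 - p.2.2 ν) ^ 2) • ((W p * T p) • Φ p)) :=
  P_second_order_pde_general n U hU hdist A hA hAz hAtr Φ hΦ hΦz hΦa hΦz0 T hT hTne hTz hTz0 hTa W
    hW hWa hWz hWz0
end
end

section
/- Let N ≥ 1, n ≥ 1, let a_1,…,a_n be pairwise distinct complex numbers, and let A_1,…,A_n be N×N complex matrices with Σ_{ν=1}^n A_ν = 0. Set Δ_ν = (1/2)·tr(A_ν²) and f_μ = Σ_{ν≠μ} tr(A_μA_ν)/(a_μ−a_ν). Then the following three identities hold: (i) Σ_{μ=1}^n f_μ = 0; (ii) Σ_{μ=1}^n (a_μ·f_μ + Δ_μ) = 0; (iii) Σ_{μ=1}^n (a_μ²·f_μ + 2Δ_μ·a_μ) = 0. -/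
open Finset

/-- Double sum symmetrization trick. -/
private lemma pair_symm {n : ℕ} (g : Fin n → Fin n → ℂ) :
    (∑ μ, ∑ ν, g μ ν) + (∑ μ, ∑ ν, g μ ν) = ∑ μ, ∑ ν, (g μ ν + g ν μ) := by
  have h1 : ∑ μ, ∑ ν, (g μ ν + g ν μ)
      = (∑ μ, ∑ ν, g μ ν) + (∑ μ, ∑ ν, g ν μ) := by
    simp_rw [Finset.sum_add_distrib]
  have h2 : (∑ μ : Fin n, ∑ ν : Fin n, g ν μ) = ∑ μ, ∑ ν, g μ ν :=
    Finset.sum_comm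
  rw [h1, h2]

/-- the three differential constraints expressing global conformal
symmetry of the isomonodromic tau function.  Here
`f μ = ∑_{ν ≠ μ} tr(A_μ A_ν)/(a_μ − a_ν)` and `Δ_μ = (1/2) tr(A_μ²)`. -/
theorem tau_global_conformal_constraints (N n : ℕ) (hN : 1 ≤ N) (hn : 1 ≤ n)
    (a : Fin n → ℂ) (ha : ∀ μ ν : Fin n, μ ≠ ν → a μ ≠ a ν)
    (A : Fin n → Matrix (Fin N) (Fin N) ℂ) (hA : ∑ ν, A ν = 0)
    (Δ : Fin n → ℂ) (hΔ : ∀ ν, Δ ν = (1 / 2) * (A ν * A ν).trace)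
    (f : Fin n → ℂ)
    (hf : ∀ μ, f μ = ∑ ν ∈ univ.erase μ, (A μ * A ν).trace / (a μ - a ν)) :
    (∑ μ, f μ = 0) ∧
    (∑ μ, (a μ * f μ + Δ μ) = 0) ∧
    (∑ μ, (a μ ^ 2 * f μ + 2 * Δ μ * a μ) = 0) := by
  -- abbreviations
  have htsymm : ∀ μ ν : Fin n, (A ν * A μ).trace = (A μ * A ν).trace :=
    fun μ ν => Matrix.trace_mul_comm _ _
  have hrow : ∀ μ, ∑ ν, (A μ * A ν).trace = 0 := by
    intro μ
    rw [← Matrix.trace_sum, ← Finset.mul_sum, hA, mul_zero, Matrix.trace_zero]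
  have hcol : ∀ ν, ∑ μ, (A μ * A ν).trace = 0 := by
    intro ν
    calc ∑ μ, (A μ * A ν).trace = ∑ μ, (A ν * A μ).trace :=
          Finset.sum_congr rfl fun μ _ => (htsymm μ ν).symm
      _ = 0 := hrow ν
  -- f as a full sum (the diagonal term vanishes since x / 0 = 0)
  have hf' : ∀ μ, f μ = ∑ ν, (A μ * A ν).trace / (a μ - a ν) := by
    intro μ
    rw [hf μ]
    exact Finset.sum_erase _ (by simp)
  -- key: (a μ - a ν) * T μ ν
  have hdw : ∀ μ ν, (a μ - a ν) * ((A μ * A ν).trace / (a μ - a ν))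
      = if μ = ν then 0 else (A μ * A ν).trace := by
    intro μ ν
    by_cases h : μ = ν
    · simp [h]
    · rw [if_neg h, mul_comm, div_mul_cancel₀]
      exact sub_ne_zero.mpr (ha μ ν h)
  -- antisymmetry of T
  have hanti : ∀ μ ν, (A ν * A μ).trace / (a ν - a μ)
      = -((A μ * A ν).trace / (a μ - a ν)) := by
    intro μ ν
    rw [htsymm μ ν, show a ν - a μ = -(a μ - a ν) by ring, div_neg]
  -- the diagonal extraction lemma
  have hdiag : ∀ (c : Fin n → Fin n → ℂ) (μ : Fin n),
      (∑ ν, if μ = ν then (0 : ℂ) else c μ ν)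
        = (∑ ν, c μ ν) - c μ μ := by
    intro c μ
    have : ∀ ν, (if μ = ν then (0 : ℂ) else c μ ν)
        = c μ ν - (if μ = ν then c μ ν else 0) := by
      intro ν; by_cases h : μ = ν <;> simp [h]
    rw [Finset.sum_congr rfl fun ν _ => this ν, Finset.sum_sub_distrib,
      Finset.sum_ite_eq]
    simp
  -- (i)
  have h1 : (∑ μ, f μ) + (∑ μ, f μ) = 0 := by
    simp_rw [hf']
    rw [pair_symm]
    apply Finset.sum_eq_zero; intro μ _
    apply Finset.sum_eq_zero; intro ν _
    rw [hanti μ ν]; ring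
  have hi : ∑ μ, f μ = 0 := by linear_combination h1 / 2
  -- (ii)
  have h2 : (∑ μ, a μ * f μ) + (∑ μ, a μ * f μ)
      = - ∑ μ, (A μ * A μ).trace := by
    have hL : ∀ μ, a μ * f μ = ∑ ν, a μ * ((A μ * A ν).trace / (a μ - a ν)) := by
      intro μ; rw [hf' μ, Finset.mul_sum]
    simp_rw [hL]
    rw [pair_symm]
    have hpt : ∀ μ ν : Fin n,
        a μ * ((A μ * A ν).trace / (a μ - a ν))
          + a ν * ((A ν * A μ).trace / (a ν - a μ))
        = if μ = ν then 0 else (A μ * A ν).trace := by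
      intro μ ν
      rw [hanti μ ν, ← hdw μ ν]; ring
    rw [Finset.sum_congr rfl fun μ _ => Finset.sum_congr rfl fun ν _ => hpt μ ν]
    rw [Finset.sum_congr rfl fun μ _ => hdiag (fun μ ν => (A μ * A ν).trace) μ]
    rw [Finset.sum_sub_distrib]
    rw [Finset.sum_congr rfl fun μ _ => hrow μ]
    simp
  have hii : ∑ μ, (a μ * f μ + Δ μ) = 0 := by
    rw [Finset.sum_add_distrib]
    have hΔs : ∑ μ, Δ μ = (1 / 2) * ∑ μ, (A μ * A μ).trace := by
      rw [Finset.mul_sum]; exact Finset.sum_congr rfl fun μ _ => hΔ μ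
    rw [hΔs]
    linear_combination h2 / 2
  -- (iii)
  have h3 : (∑ μ, a μ ^ 2 * f μ) + (∑ μ, a μ ^ 2 * f μ)
      = - ∑ μ, 2 * a μ * (A μ * A μ).trace := by
    have hL : ∀ μ, a μ ^ 2 * f μ
        = ∑ ν, a μ ^ 2 * ((A μ * A ν).trace / (a μ - a ν)) := by
      intro μ; rw [hf' μ, Finset.mul_sum]
    simp_rw [hL]
    rw [pair_symm]
    have hpt : ∀ μ ν : Fin n,
        a μ ^ 2 * ((A μ * A ν).trace / (a μ - a ν))
          + a ν ^ 2 * ((A ν * A μ).trace / (a ν - a μ))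
        = if μ = ν then 0 else (a μ + a ν) * (A μ * A ν).trace := by
      intro μ ν
      rw [hanti μ ν]
      have : a μ ^ 2 * ((A μ * A ν).trace / (a μ - a ν))
          + a ν ^ 2 * -((A μ * A ν).trace / (a μ - a ν))
          = (a μ + a ν) * ((a μ - a ν) * ((A μ * A ν).trace / (a μ - a ν))) := by
        ring
      rw [this, hdw μ ν]
      by_cases h : μ = ν <;> simp [h]
    rw [Finset.sum_congr rfl fun μ _ => Finset.sum_congr rfl fun ν _ => hpt μ ν]
    rw [Finset.sum_congr rfl fun μ _ =>
      hdiag (fun μ ν => (a μ + a ν) * (A μ * A ν).trace) μ]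
    rw [Finset.sum_sub_distrib]
    have hzero : ∑ μ, ∑ ν, (a μ + a ν) * (A μ * A ν).trace = 0 := by
      have hsplit : ∀ μ ν : Fin n, (a μ + a ν) * (A μ * A ν).trace
          = a μ * (A μ * A ν).trace + a ν * (A μ * A ν).trace := by
        intro μ ν; ring
      rw [Finset.sum_congr rfl fun μ _ => Finset.sum_congr rfl
        fun ν _ => hsplit μ ν]
      simp_rw [Finset.sum_add_distrib]
      have hA1 : ∑ μ, ∑ ν, a μ * (A μ * A ν).trace = 0 := by
        apply Finset.sum_eq_zero; intro μ _
        rw [← Finset.mul_sum, hrow μ, mul_zero]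
      have hA2 : ∑ μ : Fin n, ∑ ν : Fin n, a ν * (A μ * A ν).trace = 0 := by
        rw [Finset.sum_comm]
        apply Finset.sum_eq_zero; intro ν _
        rw [← Finset.mul_sum, hcol ν, mul_zero]
      rw [hA1, hA2, add_zero]
    rw [hzero, zero_sub, neg_inj]
    apply Finset.sum_congr rfl; intro μ _
    ring
  have hiii : ∑ μ, (a μ ^ 2 * f μ + 2 * Δ μ * a μ) = 0 := by
    rw [Finset.sum_add_distrib]
    have hΔs : ∑ μ, 2 * Δ μ * a μ = ∑ μ, a μ * (A μ * A μ).trace := by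
      apply Finset.sum_congr rfl; intro μ _
      rw [hΔ μ]; ring
    rw [hΔs]
    have : ∑ μ, 2 * a μ * (A μ * A μ).trace
        = 2 * ∑ μ, a μ * (A μ * A μ).trace := by
      rw [Finset.mul_sum]; apply Finset.sum_congr rfl; intro μ _; ring
    rw [this] at h3
    linear_combination h3 / 2
  exact ⟨hi, hii, hiii⟩
end

section
/- Let N ≥ 1, n ≥ 1, let U ⊆ ℂⁿ be an open set of points (a_1,…,a_n) with pairwise distinct coordinates, and let A_1,…,A_n : U → M_N(ℂ) be C¹ functions satisfying the Schlesinger system: ∂_{a_μ}A_ν = [A_μ,A_ν]/(a_μ−a_ν) for μ ≠ ν, and ∂_{a_ν}A_ν = −Σ_{μ≠ν} [A_μ,A_ν]/(a_μ−a_ν). Define f_μ = Σ_{ν≠μ} tr(A_μA_ν)/(a_μ−a_ν) for each μ. Then the 1-form Σ_μ f_μ da_μ is closed: for all μ, ρ, ∂_{a_ρ} f_μ = ∂_{a_μ} f_ρ on U. -/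
/-!
For `μ ≠ ρ` the Schlesinger equations give `∂_ρ f_μ = tr (A_μ A_ρ) / (a_μ - a_ρ)²`, which is
symmetric in `μ` and `ρ`. Differentiating `f_μ` term by term, the summand `ν ∉ {μ, ρ}` contributes
`c_ν / ((a_ρ - a_μ) (a_ρ - a_ν))` with `c_ν = tr ([A_ρ, A_μ] A_ν)`, by invariance of the trace form,
`tr (X [Y, Z]) = tr ([X, Y] Z)`, and a partial fraction identity. Since `∂_ρ A_ρ` is minus the sum
of the other flows, the summand `ν = ρ` contributes `tr (A_μ A_ρ) / (a_μ - a_ρ)²` minus exactly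
these terms.
-/

open Finset Matrix

attribute [local instance] Matrix.normedAddCommGroup Matrix.normedSpace

section LineDeriv

variable {𝕜 : Type*} [NontriviallyNormedField 𝕜] {E : Type*} [NormedAddCommGroup E]
  [NormedSpace 𝕜 E] {x v : E}

theorem ContinuousLinearMap.hasLineDerivAt_of_bilinear {F G H : Type*} [NormedAddCommGroup F]
    [NormedSpace 𝕜 F] [NormedAddCommGroup G] [NormedSpace 𝕜 G] [NormedAddCommGroup H]
    [NormedSpace 𝕜 H] (B : F →L[𝕜] G →L[𝕜] H) {f : E → F} {g : E → G} {f' : F} {g' : G}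
    (hf : HasLineDerivAt 𝕜 f f' x v) (hg : HasLineDerivAt 𝕜 g g' x v) :
    HasLineDerivAt 𝕜 (fun y => B (f y) (g y)) (B (f x) g' + B f' (g x)) x v := by
  simpa [HasLineDerivAt] using B.hasDerivAt_of_bilinear (fun _ => hf) (fun _ => hg)

theorem HasLineDerivAt.fun_div {c d : E → 𝕜} {c' d' : 𝕜} (hc : HasLineDerivAt 𝕜 c c' x v)
    (hd : HasLineDerivAt 𝕜 d d' x v) (hx : d x ≠ 0) :
    HasLineDerivAt 𝕜 (fun y => c y / d y) ((c' * d x - c x * d') / d x ^ 2) x v := by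
  simpa [HasLineDerivAt] using HasDerivAt.fun_div hc hd (by simpa using hx)

theorem HasLineDerivAt.fun_sum {ι F : Type*} [NormedAddCommGroup F] [NormedSpace 𝕜 F]
    {s : Finset ι} {f : ι → E → F} {f' : ι → F} (h : ∀ i ∈ s, HasLineDerivAt 𝕜 (f i) (f' i) x v) :
    HasLineDerivAt 𝕜 (fun y => ∑ i ∈ s, f i y) (∑ i ∈ s, f' i) x v :=
  HasDerivAt.fun_sum h

end LineDeriv

namespace Matrix

variable (𝕜 m : Type*) [Fintype m] [NontriviallyNormedField 𝕜] [CompleteSpace 𝕜]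

noncomputable def traceMulCLM : Matrix m m 𝕜 →L[𝕜] Matrix m m 𝕜 →L[𝕜] 𝕜 :=
  ((LinearMap.mul 𝕜 (Matrix m m 𝕜)).compr₂ (traceLinearMap m 𝕜 𝕜)).toContinuousBilinearMap

variable {m} {R : Type*} [CommRing R]

theorem trace_mul_commutator (X Y Z : Matrix m m R) :
    (X * (Y * Z - Z * Y)).trace = ((X * Y - Y * X) * Z).trace := by
  rw [Matrix.mul_sub, Matrix.sub_mul, trace_sub, trace_sub, ← Matrix.mul_assoc X Z Y,
    trace_mul_comm (X * Z) Y, Matrix.mul_assoc Y X Z, Matrix.mul_assoc X Y Z]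

theorem trace_commutator_mul_self (X Y : Matrix m m R) : ((X * Y - Y * X) * X).trace = 0 := by
  rw [Matrix.sub_mul, trace_sub, trace_mul_cycle Y X X, sub_self]

end Matrix

namespace Schlesinger

section Algebra

variable {ι m K : Type*} [Fintype m] [Field K]

/-- The derivative of `tr (A μ * A ν) / (x μ - x ν)` when `(A, x)` moves with velocity `(D, v)`. -/
def tauTermDeriv (A D : ι → Matrix m m K) (x v : ι → K) (μ ν : ι) : K :=
  (((D μ * A ν).trace + (A μ * D ν).trace) * (x μ - x ν) - (A μ * A ν).trace * (v μ - v ν)) /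
    (x μ - x ν) ^ 2

variable [DecidableEq ι] {A D : ι → Matrix m m K} {x : ι → K} {μ ρ : ι}

theorem tauTermDeriv_of_ne (hx : Function.Injective x)
    (hD : ∀ ν, ν ≠ ρ → D ν = (x ρ - x ν)⁻¹ • (A ρ * A ν - A ν * A ρ))
    (hμρ : μ ≠ ρ) {ν : ι} (hνμ : ν ≠ μ) (hνρ : ν ≠ ρ) :
    tauTermDeriv A D x (Pi.single ρ 1) μ ν =
      ((A ρ * A μ - A μ * A ρ) * A ν).trace / ((x ρ - x μ) * (x ρ - x ν)) := by
  have hcomm : (A μ * (A ρ * A ν - A ν * A ρ)).trace = -((A ρ * A μ - A μ * A ρ) * A ν).trace := by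
    rw [trace_mul_commutator, ← trace_neg, ← Matrix.neg_mul, neg_sub]
  have h₁ : x μ - x ν ≠ 0 := sub_ne_zero.2 (hx.ne hνμ.symm)
  have h₂ : x ρ - x μ ≠ 0 := sub_ne_zero.2 (hx.ne hμρ.symm)
  have h₃ : x ρ - x ν ≠ 0 := sub_ne_zero.2 (hx.ne hνρ.symm)
  rw [tauTermDeriv, hD μ hμρ, hD ν hνρ, Pi.single_eq_of_ne hμρ, Pi.single_eq_of_ne hνρ,
    Matrix.smul_mul, Matrix.mul_smul, trace_smul, trace_smul, hcomm, smul_eq_mul, smul_eq_mul]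
  field_simp
  ring

theorem tauTermDeriv_self_right [Fintype ι] (hx : Function.Injective x)
    (hD : ∀ ν, ν ≠ ρ → D ν = (x ρ - x ν)⁻¹ • (A ρ * A ν - A ν * A ρ))
    (hDρ : D ρ = -∑ κ ∈ univ.erase ρ, (x κ - x ρ)⁻¹ • (A κ * A ρ - A ρ * A κ))
    (hμρ : μ ≠ ρ) :
    tauTermDeriv A D x (Pi.single ρ 1) μ ρ = (A μ * A ρ).trace / (x μ - x ρ) ^ 2 -
      ∑ ν ∈ (univ.erase μ).erase ρ,
        ((A ρ * A μ - A μ * A ρ) * A ν).trace / ((x ρ - x μ) * (x ρ - x ν)) := by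
  have hself : (D μ * A ρ).trace = 0 := by
    rw [hD μ hμρ, Matrix.smul_mul, trace_smul, trace_commutator_mul_self, smul_zero]
  have hsum : (A μ * D ρ).trace = -∑ ν ∈ (univ.erase μ).erase ρ,
      (x ν - x ρ)⁻¹ * ((A ρ * A μ - A μ * A ρ) * A ν).trace := by
    rw [hDρ, Matrix.mul_neg, trace_neg, Matrix.mul_sum, trace_sum,
      ← add_sum_erase _ _ (mem_erase.2 ⟨hμρ, mem_univ μ⟩), erase_right_comm]
    have hcycle : ∀ ν, ((A μ * A ν - A ν * A μ) * A ρ).trace =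
        ((A ρ * A μ - A μ * A ρ) * A ν).trace := fun ν => by
      rw [trace_mul_comm, trace_mul_commutator]
    simp only [Matrix.mul_smul, trace_smul, smul_eq_mul, trace_mul_commutator, hcycle, sub_self,
      Matrix.zero_mul, trace_zero, mul_zero, zero_add]
  have h₁ : x μ - x ρ ≠ 0 := sub_ne_zero.2 (hx.ne hμρ)
  rw [tauTermDeriv, hself, hsum, Pi.single_eq_of_ne hμρ, Pi.single_eq_same, zero_add,
    sub_div, neg_mul, sum_mul, neg_div, sum_div]
  have hterm : ∀ ν ∈ (univ.erase μ).erase ρ,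
      (x ν - x ρ)⁻¹ * ((A ρ * A μ - A μ * A ρ) * A ν).trace * (x μ - x ρ) / (x μ - x ρ) ^ 2 =
        ((A ρ * A μ - A μ * A ρ) * A ν).trace / ((x ρ - x μ) * (x ρ - x ν)) := fun ν hν => by
    have h₂ : x ν - x ρ ≠ 0 := sub_ne_zero.2 (hx.ne (ne_of_mem_erase hν))
    rw [← neg_sub (x μ), ← neg_sub (x ν), neg_mul_neg]
    field_simp
  rw [sum_congr rfl hterm]
  ring

theorem sum_tauTermDeriv [Fintype ι] (hx : Function.Injective x)
    (hD : ∀ ν, ν ≠ ρ → D ν = (x ρ - x ν)⁻¹ • (A ρ * A ν - A ν * A ρ))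
    (hDρ : D ρ = -∑ κ ∈ univ.erase ρ, (x κ - x ρ)⁻¹ • (A κ * A ρ - A ρ * A κ))
    (hμρ : μ ≠ ρ) :
    ∑ ν ∈ univ.erase μ, tauTermDeriv A D x (Pi.single ρ 1) μ ν =
      (A μ * A ρ).trace / (x μ - x ρ) ^ 2 := by
  rw [← add_sum_erase _ _ (mem_erase.2 ⟨hμρ.symm, mem_univ ρ⟩),
    tauTermDeriv_self_right hx hD hDρ hμρ, sum_congr rfl fun ν hν =>
    tauTermDeriv_of_ne hx hD hμρ (ne_of_mem_erase (mem_of_mem_erase hν)) (ne_of_mem_erase hν),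
    sub_add_cancel]

end Algebra

section Analysis

variable {ι m 𝕜 : Type*} [Fintype ι] [DecidableEq ι] [Fintype m] [NontriviallyNormedField 𝕜]
  [CompleteSpace 𝕜]

/-- The coefficient `f_μ` of the 1-form `d log τ`. -/
def tauCoeff (A : ι → (ι → 𝕜) → Matrix m m 𝕜) (μ : ι) (b : ι → 𝕜) : 𝕜 :=
  ∑ ν ∈ univ.erase μ, (A μ b * A ν b).trace / (b μ - b ν)

variable {A : ι → (ι → 𝕜) → Matrix m m 𝕜} {a : ι → 𝕜}

theorem hasLineDerivAt_tauCoeff (hA : ∀ ν, DifferentiableAt 𝕜 (A ν) a)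
    (ha : Function.Injective a) (μ : ι) (v : ι → 𝕜) :
    HasLineDerivAt 𝕜 (tauCoeff A μ)
      (∑ ν ∈ univ.erase μ, tauTermDeriv (fun ν => A ν a) (fun ν => fderiv 𝕜 (A ν) a v) a v μ ν)
      a v := by
  refine HasLineDerivAt.fun_sum fun ν hν => ?_
  have hdiff : HasLineDerivAt 𝕜 (fun b : ι → 𝕜 => b μ - b ν) (v μ - v ν) a v := by
    simpa using ((hasFDerivAt_apply (𝕜 := 𝕜) μ a).fun_sub (hasFDerivAt_apply ν a)).hasLineDerivAt v
  have htrace : HasLineDerivAt 𝕜 (fun b => (A μ b * A ν b).trace)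
      ((A μ a * fderiv 𝕜 (A ν) a v).trace + (fderiv 𝕜 (A μ) a v * A ν a).trace) a v :=
    (traceMulCLM 𝕜 m).hasLineDerivAt_of_bilinear
      ((hA μ).hasFDerivAt.hasLineDerivAt v) ((hA ν).hasFDerivAt.hasLineDerivAt v)
  convert htrace.fun_div hdiff (sub_ne_zero.2 (ha.ne (ne_of_mem_erase hν).symm)) using 1
  rw [tauTermDeriv]
  ring

theorem differentiableAt_tauCoeff (hA : ∀ ν, DifferentiableAt 𝕜 (A ν) a)
    (ha : Function.Injective a) (μ : ι) : DifferentiableAt 𝕜 (tauCoeff A μ) a := by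
  unfold tauCoeff
  refine DifferentiableAt.fun_sum fun ν hν => ?_
  simp only [div_eq_mul_inv]
  exact (((traceMulCLM 𝕜 m).isBoundedBilinearMap.differentiableAt _).comp a
    ((hA μ).prodMk (hA ν))).fun_mul (DifferentiableAt.fun_inv (by fun_prop)
    (sub_ne_zero.2 (ha.ne (ne_of_mem_erase hν).symm)))

theorem fderiv_tauCoeff_apply (hA : ∀ ν, DifferentiableAt 𝕜 (A ν) a)
    (ha : Function.Injective a) (μ : ι) (v : ι → 𝕜) :
    fderiv 𝕜 (tauCoeff A μ) a v =
      ∑ ν ∈ univ.erase μ, tauTermDeriv (fun ν => A ν a) (fun ν => fderiv 𝕜 (A ν) a v) a v μ ν := by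
  rw [← (differentiableAt_tauCoeff hA ha μ).lineDeriv_eq_fderiv]
  exact (hasLineDerivAt_tauCoeff hA ha μ v).lineDeriv

end Analysis

end Schlesinger

theorem schlesinger_tau_form_closed_general (N n : ℕ)
    (U : Set (Fin n → ℂ)) (hU : IsOpen U)
    (hdist : ∀ a ∈ U, ∀ μ ν : Fin n, μ ≠ ν → a μ ≠ a ν)
    (A : Fin n → (Fin n → ℂ) → Matrix (Fin N) (Fin N) ℂ)
    (hA : ∀ ν, ContDiffOn ℂ 1 (A ν) U)
    (hSch1 : ∀ a ∈ U, ∀ μ ν : Fin n, μ ≠ ν →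
      fderiv ℂ (A ν) a (Pi.single μ 1) =
        (a μ - a ν)⁻¹ • (A μ a * A ν a - A ν a * A μ a))
    (hSch2 : ∀ a ∈ U, ∀ ν : Fin n,
      fderiv ℂ (A ν) a (Pi.single ν 1) =
        -∑ μ ∈ univ.erase ν, (a μ - a ν)⁻¹ • (A μ a * A ν a - A ν a * A μ a))
    (f : Fin n → (Fin n → ℂ) → ℂ)
    (hf : ∀ μ, ∀ b, f μ b = ∑ ν ∈ univ.erase μ, (A μ b * A ν b).trace / (b μ - b ν)) :
    ∀ a ∈ U, ∀ μ ρ : Fin n,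
      fderiv ℂ (f μ) a (Pi.single ρ 1) = fderiv ℂ (f ρ) a (Pi.single μ 1) := by
  intro a ha μ ρ
  obtain rfl | hμρ := eq_or_ne μ ρ
  · rfl
  obtain rfl : f = Schlesinger.tauCoeff A := funext fun μ => funext (hf μ)
  have hinj : Function.Injective a := fun μ ν h => by_contra fun hne => hdist a ha μ ν hne h
  have hdiff : ∀ ν, DifferentiableAt ℂ (A ν) a := fun ν =>
    ((hA ν).differentiableOn one_ne_zero).differentiableAt (hU.mem_nhds ha)
  have hpartial : ∀ μ ρ, μ ≠ ρ →
      fderiv ℂ (Schlesinger.tauCoeff A μ) a (Pi.single ρ 1) =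
        (A μ a * A ρ a).trace / (a μ - a ρ) ^ 2 := fun μ ρ hμρ => by
    rw [Schlesinger.fderiv_tauCoeff_apply hdiff hinj]
    exact Schlesinger.sum_tauTermDeriv hinj (fun ν hν => hSch1 a ha ρ ν hν.symm) (hSch2 a ha ρ) hμρ
  rw [hpartial μ ρ hμρ, hpartial ρ μ hμρ.symm, trace_mul_comm, ← neg_sub (a μ), neg_sq]

/-- along solutions of the Schlesinger system the 1-form
`∑_μ f_μ da_μ`, with `f_μ = ∑_{ν≠μ} tr(A_μA_ν)/(a_μ−a_ν)`, is closed: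
`∂_{a_ρ} f_μ = ∂_{a_μ} f_ρ`.  Partial derivatives are directional derivatives
`fderiv ℂ F a (Pi.single μ 1)` on the open set `U ⊆ ℂⁿ` of configurations with
pairwise distinct coordinates. -/
theorem schlesinger_tau_form_closed (N n : ℕ) (hN : 1 ≤ N) (hn : 1 ≤ n)
    (U : Set (Fin n → ℂ)) (hU : IsOpen U)
    (hdist : ∀ a ∈ U, ∀ μ ν : Fin n, μ ≠ ν → a μ ≠ a ν)
    (A : Fin n → (Fin n → ℂ) → Matrix (Fin N) (Fin N) ℂ)
    (hA : ∀ ν, ContDiffOn ℂ 1 (A ν) U)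
    (hSch1 : ∀ a ∈ U, ∀ μ ν : Fin n, μ ≠ ν →
      fderiv ℂ (A ν) a (Pi.single μ 1) =
        (a μ - a ν)⁻¹ • (A μ a * A ν a - A ν a * A μ a))
    (hSch2 : ∀ a ∈ U, ∀ ν : Fin n,
      fderiv ℂ (A ν) a (Pi.single ν 1) =
        -∑ μ ∈ univ.erase ν, (a μ - a ν)⁻¹ • (A μ a * A ν a - A ν a * A μ a))
    (f : Fin n → (Fin n → ℂ) → ℂ)
    (hf : ∀ μ, ∀ b, f μ b = ∑ ν ∈ univ.erase μ, (A μ b * A ν b).trace / (b μ - b ν)) :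
    ∀ a ∈ U, ∀ μ ρ : Fin n,
      fderiv ℂ (f μ) a (Pi.single ρ 1) = fderiv ℂ (f ρ) a (Pi.single μ 1) :=
  schlesinger_tau_form_closed_general N n U hU hdist A hA hSch1 hSch2 f hf
end

section
/- Let M_0, M_t, M_1 be elements of SL(2,ℂ) and define p_0 = tr M_0, p_t = tr M_t, p_1 = tr M_1, p_∞ = tr(M_1 M_t M_0), p_{0t} = tr(M_t M_0), p_{1t} = tr(M_1 M_t), p_{01} = tr(M_1 M_0). Then the Jimbo–Fricke relation holds: p_{0t}² + p_{1t}² + p_{01}² + p_{0t}p_{1t}p_{01} + p_0² + p_t² + p_1² + p_∞² + p_0 p_t p_1 p_∞ = (p_0 p_t + p_1 p_∞)p_{0t} + (p_1 p_t + p_0 p_∞)p_{1t} + (p_0 p_1 + p_t p_∞)p_{01} + 4. -/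
private lemma jf_key (a0 b0 c0 d0 A B C D a1 b1 c1 d1 : ℂ)
    (h0 : a0 * d0 - b0 * c0 = 1) (ht : A * D - B * C = 1) (h1 : a1 * d1 - b1 * c1 = 1) :
    (fun p0 pt p1 pinf p0t p1t p01 : ℂ =>
      p0t ^ 2 + p1t ^ 2 + p01 ^ 2 + p0t * p1t * p01
        + p0 ^ 2 + pt ^ 2 + p1 ^ 2 + pinf ^ 2 + p0 * pt * p1 * pinf =
      (p0 * pt + p1 * pinf) * p0t + (p1 * pt + p0 * pinf) * p1t
        + (p0 * p1 + pt * pinf) * p01 + 4)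
    (a0 + d0) (A + D) (a1 + d1)
    (a0*A*a1 + a0*C*b1 + b0*A*c1 + b0*C*d1 + c0*B*a1 + c0*D*b1 + d0*B*c1 + d0*D*d1)
    (a0*A + b0*C + c0*B + d0*D) (A*a1 + B*c1 + C*b1 + D*d1) (a0*a1 + b0*c1 + c0*b1 + d0*d1) := by
  simp only []
  linear_combination ((2) * 1 + (-1) * d1 * d1 + (-1) * a1 * a1 + (-1) * D * D + (1) * D * D * a1 * d1 + (-1) * C * D * b1 * d1 + (1) * C * D * a1 * b1 + (-1) * C * C * b1 * b1 + (-1) * B * D * c1 * d1 + (1) * B * D * a1 * c1 + (-1) * B * B * c1 * c1 + (1) * A * D * d1 * d1 + (-2) * A * D * a1 * d1 + (1) * A * D * a1 * a1 + (1) * A * C * b1 * d1 + (-1) * A * C * a1 * b1 + (1) * A * B * c1 * d1 + (-1) * A * B * a1 * c1 + (-1) * A * A + (1) * A * A * a1 * d1) * h0 + ((2) * 1 + (-2) * a1 * d1 + (-1) * d0 * d0 + (1) * d0 * d0 * a1 * d1 + (-1) * c0 * d0 * b1 * d1 + (1) * c0 * d0 * a1 * b1 + (-1) * c0 * c0 *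 b1 * b1 + (-1) * b0 * d0 * c1 * d1 + (1) * b0 * d0 * a1 * c1 + (1) * b0 * c0 * d1 * d1 + (-2) * b0 * c0 * a1 * d1 + (1) * b0 * c0 * a1 * a1 + (-1) * b0 * b0 * c1 * c1 + (1) * a0 * c0 * b1 * d1 + (-1) * a0 * c0 * a1 * b1 + (1) * a0 * b0 * c1 * d1 + (-1) * a0 * b0 * a1 * c1 + (-1) * a0 * a0 + (1) * a0 * a0 * a1 * d1) * ht + ((-2) * B * C + (1) * d0 * d0 * B * C + (-1) * c0 * d0 * B * D + (1) * c0 * d0 * A * B + (-1) * c0 * c0 * B * B + (-1) * b0 * d0 * C * D + (1) * b0 * d0 * A * C + (-2) * b0 * c0 + (1) * b0 * c0 * D * D + (-2) * b0 * c0 * B * C + (1) * b0 * c0 * A * A + (-1) * b0 * b0 * C * C + (1) * a0 * c0 * B * D + (-1) * a0 * c0 * A * B + (1) * a0 * b0 * C * D + (-1) * a0 * b0 * A * C + (1) * a0 * a0 * B * C) * h1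



/-- the Jimbo–Fricke relation for the trace coordinates of a triple
of `SL(2,ℂ)` monodromy matrices `M_0, M_t, M_1` (with `p_∞ = tr (M_1 M_t M_0)`). -/
theorem jimbo_fricke_relation (M0 Mt M1 : Matrix.SpecialLinearGroup (Fin 2) ℂ) :
    (fun p0 pt p1 pinf p0t p1t p01 : ℂ =>
      p0t ^ 2 + p1t ^ 2 + p01 ^ 2 + p0t * p1t * p01
        + p0 ^ 2 + pt ^ 2 + p1 ^ 2 + pinf ^ 2 + p0 * pt * p1 * pinf =
      (p0 * pt + p1 * pinf) * p0t + (p1 * pt + p0 * pinf) * p1t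
        + (p0 * p1 + pt * pinf) * p01 + 4)
    (Matrix.trace (M0 : Matrix (Fin 2) (Fin 2) ℂ))
    (Matrix.trace (Mt : Matrix (Fin 2) (Fin 2) ℂ))
    (Matrix.trace (M1 : Matrix (Fin 2) (Fin 2) ℂ))
    (Matrix.trace ((M1 * Mt * M0 : Matrix.SpecialLinearGroup (Fin 2) ℂ) : Matrix (Fin 2) (Fin 2) ℂ))
    (Matrix.trace ((Mt * M0 : Matrix.SpecialLinearGroup (Fin 2) ℂ) : Matrix (Fin 2) (Fin 2) ℂ))
    (Matrix.trace ((M1 * Mt : Matrix.SpecialLinearGroup (Fin 2) ℂ) : Matrix (Fin 2) (Fin 2) ℂ))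
    (Matrix.trace ((M1 * M0 : Matrix.SpecialLinearGroup (Fin 2) ℂ) : Matrix (Fin 2) (Fin 2) ℂ)) := by
  have h0 := M0.2
  have ht := Mt.2
  have h1 := M1.2
  rw [Matrix.det_fin_two] at h0 ht h1
  simp only [Matrix.SpecialLinearGroup.coe_mul, Matrix.trace_fin_two, Matrix.mul_apply,
    Fin.sum_univ_two]
  have := jf_key (M0.1 0 0) (M0.1 0 1) (M0.1 1 0) (M0.1 1 1)
    (Mt.1 0 0) (Mt.1 0 1) (Mt.1 1 0) (Mt.1 1 1)
    (M1.1 0 0) (M1.1 0 1) (M1.1 1 0) (M1.1 1 1) h0 ht h1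
  simp only [] at this ⊢
  linear_combination this
end

section
/- Let M_0, M_t, M_1 be elements of SL(2,ℂ) and define p_0 = tr M_0, p_t = tr M_t, p_1 = tr M_1, p_∞ = tr(M_1 M_t M_0), p_{0t} = tr(M_t M_0), p_{1t} = tr(M_1 M_t), p_{01} = tr(M_1 M_0). Then tr(M_1 · M_t M_0 M_t^{−1}) = p_0 p_1 + p_t p_∞ − p_{01} − p_{0t} p_{1t}. -/
/-- under the braid transformation `M_0 ↦ M_t M_0 M_t⁻¹`, the new
trace coordinate `p_{01}' = tr(M_1 · M_t M_0 M_t⁻¹)` is expressed polynomially in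
the original seven trace coordinates. -/
theorem braid_trace_p01 (M0 Mt M1 : Matrix.SpecialLinearGroup (Fin 2) ℂ) :
    (fun p0 pt p1 pinf p0t p1t p01 : ℂ =>
      Matrix.trace ((M1 * (Mt * M0 * Mt⁻¹) : Matrix.SpecialLinearGroup (Fin 2) ℂ) :
          Matrix (Fin 2) (Fin 2) ℂ) =
        p0 * p1 + pt * pinf - p01 - p0t * p1t)
    (Matrix.trace (M0 : Matrix (Fin 2) (Fin 2) ℂ))
    (Matrix.trace (Mt : Matrix (Fin 2) (Fin 2) ℂ))
    (Matrix.trace (M1 : Matrix (Fin 2) (Fin 2) ℂ))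
    (Matrix.trace ((M1 * Mt * M0 : Matrix.SpecialLinearGroup (Fin 2) ℂ) : Matrix (Fin 2) (Fin 2) ℂ))
    (Matrix.trace ((Mt * M0 : Matrix.SpecialLinearGroup (Fin 2) ℂ) : Matrix (Fin 2) (Fin 2) ℂ))
    (Matrix.trace ((M1 * Mt : Matrix.SpecialLinearGroup (Fin 2) ℂ) : Matrix (Fin 2) (Fin 2) ℂ))
    (Matrix.trace ((M1 * M0 : Matrix.SpecialLinearGroup (Fin 2) ℂ) : Matrix (Fin 2) (Fin 2) ℂ)) := by
  have h0 := M0.property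
  have ht := Mt.property
  have h1 := M1.property
  simp only [Matrix.SpecialLinearGroup.coe_mul, Matrix.SpecialLinearGroup.coe_inv,
    Matrix.det_fin_two] at *
  simp only [Matrix.trace_fin_two, Matrix.mul_apply, Matrix.adjugate_fin_two,
    Fin.sum_univ_two, Matrix.of_apply, Matrix.cons_val', Matrix.cons_val_zero,
    Matrix.cons_val_one, Matrix.head_cons, Matrix.head_fin_const, Matrix.empty_val',
    Matrix.cons_val_fin_one]
  ring_nf
  linear_combination (((M1 : Matrix (Fin 2) (Fin 2) ℂ) 0 0) * ((M0 : Matrix (Fin 2) (Fin 2) ℂ) 1 1) + ((M0 : Matrix (Fin 2) (Fin 2) ℂ) 0 0) * ((M1 : Matrix (Fin 2) (Fin 2) ℂ) 1 1) - ((M0 : Matrix (Fin 2) (Fin 2) ℂ) 0 1) * ((M1 : Matrix (Fin 2) (Fin 2) ℂ) 1 0) - ((M0 : Matrix (Fin 2) (Fin 2) ℂ) 1 0) * ((M1 : Matrix (Fin 2) (Fin 2) ℂ) 0 1) : ℂ) * ht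
end

section
/- Let M_0, M_t, M_1 be elements of SL(2,ℂ) and define p_0 = tr M_0, p_t = tr M_t, p_1 = tr M_1, p_∞ = tr(M_1 M_t M_0), p_{0t} = tr(M_t M_0), p_{1t} = tr(M_1 M_t), p_{01} = tr(M_1 M_0), and p_{01}' = p_0 p_1 + p_t p_∞ − p_{01} − p_{0t}p_{1t}. Then tr(M_1 · (M_t M_0) M_t (M_t M_0)^{−1}) = p_1 p_t + p_0 p_∞ − p_{1t} − p_{0t}·p_{01}'. -/
/-- under the braid transformation `M_t ↦ (M_t M_0) M_t (M_t M_0)⁻¹`,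
the new trace coordinate `p_{1t}' = tr(M_1 · (M_t M_0) M_t (M_t M_0)⁻¹)` is expressed
polynomially in the original trace coordinates and in
`p_{01}' = p_0 p_1 + p_t p_∞ − p_{01} − p_{0t} p_{1t}`. -/
theorem braid_trace_p1t (M0 Mt M1 : Matrix.SpecialLinearGroup (Fin 2) ℂ) :
    (fun p0 pt p1 pinf p0t p1t p01 : ℂ =>
      Matrix.trace ((M1 * ((Mt * M0) * Mt * (Mt * M0)⁻¹) : Matrix.SpecialLinearGroup (Fin 2) ℂ) :
          Matrix (Fin 2) (Fin 2) ℂ) =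
        p1 * pt + p0 * pinf - p1t - p0t * (p0 * p1 + pt * pinf - p01 - p0t * p1t))
    (Matrix.trace (M0 : Matrix (Fin 2) (Fin 2) ℂ))
    (Matrix.trace (Mt : Matrix (Fin 2) (Fin 2) ℂ))
    (Matrix.trace (M1 : Matrix (Fin 2) (Fin 2) ℂ))
    (Matrix.trace ((M1 * Mt * M0 : Matrix.SpecialLinearGroup (Fin 2) ℂ) : Matrix (Fin 2) (Fin 2) ℂ))
    (Matrix.trace ((Mt * M0 : Matrix.SpecialLinearGroup (Fin 2) ℂ) : Matrix (Fin 2) (Fin 2) ℂ))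
    (Matrix.trace ((M1 * Mt : Matrix.SpecialLinearGroup (Fin 2) ℂ) : Matrix (Fin 2) (Fin 2) ℂ))
    (Matrix.trace ((M1 * M0 : Matrix.SpecialLinearGroup (Fin 2) ℂ) : Matrix (Fin 2) (Fin 2) ℂ)) := by
  have h0 : (M0 : Matrix (Fin 2) (Fin 2) ℂ).det = 1 := M0.2
  have ht : (Mt : Matrix (Fin 2) (Fin 2) ℂ).det = 1 := Mt.2
  have h1 : (M1 : Matrix (Fin 2) (Fin 2) ℂ).det = 1 := M1.2
  rw [Matrix.det_fin_two] at h0 ht h1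
  simp only [Matrix.SpecialLinearGroup.coe_mul, Matrix.SpecialLinearGroup.coe_inv,
    Matrix.adjugate_fin_two, Matrix.of_apply, Matrix.trace_fin_two, Matrix.mul_apply, Fin.sum_univ_two,
    Matrix.cons_val', Matrix.cons_val_zero, Matrix.cons_val_one, Matrix.head_cons,
    Matrix.empty_val', Matrix.cons_val_fin_one, Matrix.head_fin_const]
  set x0 := (M0 : Matrix (Fin 2) (Fin 2) ℂ) 0 0
  set y0 := (M0 : Matrix (Fin 2) (Fin 2) ℂ) 0 1
  set z0 := (M0 : Matrix (Fin 2) (Fin 2) ℂ) 1 0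
  set w0 := (M0 : Matrix (Fin 2) (Fin 2) ℂ) 1 1
  set xt := (Mt : Matrix (Fin 2) (Fin 2) ℂ) 0 0
  set yt := (Mt : Matrix (Fin 2) (Fin 2) ℂ) 0 1
  set zt := (Mt : Matrix (Fin 2) (Fin 2) ℂ) 1 0
  set wt := (Mt : Matrix (Fin 2) (Fin 2) ℂ) 1 1
  set x1 := (M1 : Matrix (Fin 2) (Fin 2) ℂ) 0 0
  set y1 := (M1 : Matrix (Fin 2) (Fin 2) ℂ) 0 1
  set z1 := (M1 : Matrix (Fin 2) (Fin 2) ℂ) 1 0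
  set w1 := (M1 : Matrix (Fin 2) (Fin 2) ℂ) 1 1
  linear_combination ((-1)*zt*y1 + (-1)*yt*z1 + (-1)*yt*zt*wt*x1 + xt*wt*wt*x1 + (-1)*xt*yt*zt*w1 + xt*xt*wt*w1) * h0 + (wt*x1 + xt*w1 + w0*w0*wt*w1 + (-1)*w0*w0*wt*x1 + w0*w0*yt*z1 + 2*z0*w0*wt*y1 + z0*z0*yt*y1 + y0*w0*wt*z1 + y0*w0*zt*w1 + (-1)*y0*w0*zt*x1 + y0*w0*xt*z1 + 2*y0*z0*zt*y1 + 2*y0*z0*yt*z1 + y0*y0*zt*z1 + x0*z0*wt*y1 + (-1)*x0*z0*yt*w1 + x0*z0*yt*x1 + x0*z0*xt*y1 + 2*x0*y0*xt*z1 + x0*x0*zt*y1 + (-1)*x0*x0*xt*w1 + x0*x0*xt*x1) * ht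
end

section
/- Let θ_0, θ_t, θ_1, θ_∞, σ_{0t} ∈ ℂ and p_{01}, p_{1t} ∈ ℂ. Set p_ν = 2cos 2πθ_ν for ν ∈ {0,t,1,∞} and p_{0t} = 2cos 2πσ_{0t}, and assume the Jimbo–Fricke relation p_{0t}² + p_{1t}² + p_{01}² + p_{0t}p_{1t}p_{01} + p_0² + p_t² + p_1² + p_∞² + p_0 p_t p_1 p_∞ = (p_0 p_t + p_1 p_∞)p_{0t} + (p_1 p_t + p_0 p_∞)p_{1t} + (p_0 p_1 + p_t p_∞)p_{01} + 4. Define R(x,y) = (cos 2πθ_t cos 2πθ_1 + cos 2πθ_0 cos 2πθ_∞ + (i/2)·sin 2πσ_{0t}·x) − (cos 2πθ_0 cos 2πθ_1 + cos 2πθ_t cos 2πθ_∞ − (i/2)·sin 2πσ_{0t}·y)·e^{2πiσ_{0t}}, and set p_{01}' = p_0 p_1 + p_t p_∞ − p_{01} − p_{0t}p_{1t} and p_{1t}' = p_1 p_t + p_0 p_∞ − p_{1t} − p_{0t}p_{01}'. Then R(p_{01}', p_{1t}') = e^{4πiσ_{0t}}·R(p_{01}, p_{1t}). -/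
open Complex

/-- equivariance of the quantity `R` (whose value defines the parameter `s`
in the Painlevé VI tau function expansion) under the analytic-continuation transformation
`p_{01} ↦ p_{01}'`, `p_{1t} ↦ p_{1t}'` of the monodromy trace coordinates:
`R(p_{01}', p_{1t}') = e^{4πiσ_{0t}}·R(p_{01}, p_{1t})`, assuming the Jimbo–Fricke relation. -/
theorem s_parameter_braid_equivariance (θ0 θt θ1 θinf σ0t p01 p1t : ℂ)
    (p0 pt p1 pinf p0t : ℂ)
    (hp0 : p0 = 2 * Complex.cos (2 * (Real.pi : ℂ) * θ0))
    (hpt : pt = 2 * Complex.cos (2 * (Real.pi : ℂ) * θt))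
    (hp1 : p1 = 2 * Complex.cos (2 * (Real.pi : ℂ) * θ1))
    (hpinf : pinf = 2 * Complex.cos (2 * (Real.pi : ℂ) * θinf))
    (hp0t : p0t = 2 * Complex.cos (2 * (Real.pi : ℂ) * σ0t))
    (hJF : p0t ^ 2 + p1t ^ 2 + p01 ^ 2 + p0t * p1t * p01
        + p0 ^ 2 + pt ^ 2 + p1 ^ 2 + pinf ^ 2 + p0 * pt * p1 * pinf =
      (p0 * pt + p1 * pinf) * p0t + (p1 * pt + p0 * pinf) * p1t
        + (p0 * p1 + pt * pinf) * p01 + 4)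
    (R : ℂ → ℂ → ℂ)
    (hR : ∀ x y : ℂ, R x y =
      (Complex.cos (2 * (Real.pi : ℂ) * θt) * Complex.cos (2 * (Real.pi : ℂ) * θ1)
          + Complex.cos (2 * (Real.pi : ℂ) * θ0) * Complex.cos (2 * (Real.pi : ℂ) * θinf)
          + (Complex.I / 2) * Complex.sin (2 * (Real.pi : ℂ) * σ0t) * x)
        - (Complex.cos (2 * (Real.pi : ℂ) * θ0) * Complex.cos (2 * (Real.pi : ℂ) * θ1)
          + Complex.cos (2 * (Real.pi : ℂ) * θt) * Complex.cos (2 * (Real.pi : ℂ) * θinf)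
          - (Complex.I / 2) * Complex.sin (2 * (Real.pi : ℂ) * σ0t) * y)
          * Complex.exp (2 * (Real.pi : ℂ) * Complex.I * σ0t))
    (p01' p1t' : ℂ)
    (hp01' : p01' = p0 * p1 + pt * pinf - p01 - p0t * p1t)
    (hp1t' : p1t' = p1 * pt + p0 * pinf - p1t - p0t * p01') :
    R p01' p1t' = Complex.exp (4 * (Real.pi : ℂ) * Complex.I * σ0t) * R p01 p1t := by
  have hX : (2 * (Real.pi : ℂ) * Complex.I * σ0t) = (2 * (Real.pi : ℂ) * σ0t) * Complex.I := by
    ring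
  have hX2 : (4 * (Real.pi : ℂ) * Complex.I * σ0t) =
      (2 * (Real.pi : ℂ) * σ0t) * Complex.I + (2 * (Real.pi : ℂ) * σ0t) * Complex.I := by
    ring
  rw [hR, hR, hX, hX2, Complex.exp_add, Complex.exp_mul_I]
  have hpyth := Complex.sin_sq_add_cos_sq (2 * (Real.pi : ℂ) * σ0t)
  set s := Complex.sin (2 * (Real.pi : ℂ) * σ0t)
  set c := Complex.cos (2 * (Real.pi : ℂ) * σ0t)
  set a0 := Complex.cos (2 * (Real.pi : ℂ) * θ0)
  set at' := Complex.cos (2 * (Real.pi : ℂ) * θt)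
  set a1 := Complex.cos (2 * (Real.pi : ℂ) * θ1)
  set ai := Complex.cos (2 * (Real.pi : ℂ) * θinf)
  subst hp0 hpt hp1 hpinf hp0t hp01' hp1t'
  have hI : Complex.I ^ 2 = -1 := Complex.I_sq
  linear_combination (-(at' * a1) - a0 * ai + c * at' * ai + c * a0 * a1
    - s * at' * ai * Complex.I - s * a0 * a1 * Complex.I
    + (1/2) * s * p01 * Complex.I + (3/2) * s * c * p1t * Complex.I
    - (1/2) * s^2 * p1t) * hpyth
  + (s^2 * at' * a1 + s^2 * a0 * ai - (1/2) * s^2 * p1t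
    - s^2 * c * at' * ai - s^2 * c * a0 * a1 + (1/2) * s^2 * c^2 * p1t
    + s^3 * at' * ai * Complex.I + s^3 * a0 * a1 * Complex.I
    - (1/2) * s^3 * p01 * Complex.I - (3/2) * s^3 * c * p1t * Complex.I
    + (1/2) * s^4 * p1t - (1/2) * s^4 * p1t * Complex.I^2) * hI
end

section
/- Let θ_0, θ_t, θ_1 be real numbers such that 1 + 2θ_1 is not a nonpositive integer, and define on (0,1) the hypergeometric series F(t) = Σ_{k=0}^∞ [(θ_0+θ_t+θ_1+1/2)_k · (θ_0−θ_t+θ_1+1/2)_k / ((1+2θ_1)_k · k!)]·t^k, where (x)_k = x(x+1)⋯(x+k−1) denotes the ascending Pochhammer symbol. Then the function τ(t) = t^{(θ_1+1/2)²−θ_0²−θ_t²}·(1−t)^{(θ_0+1/2)²−θ_t²−θ_1²}·F(t) (real powers of positive real bases) satisfies, on (0,1), the linear ODE τ'' + 2·[ (θ_0²−θ_1²+θ_t²+1/4)/t + (θ_1²−θ_0²+θ_t²+1/4)/(t−1) ]·τ' + [ ((θ_0+θ_1)²+θ_t²−1/4)/(t(t−1)) + ∏_{ε=±1} ( (θ_0²+θ_t²−(εθ_1+1/2)²)/t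 + (θ_t²+θ_1²−(εθ_0+1/2)²)/(t−1) ) ]·τ = 0. -/
/-!
`τ = t^p (1-t)^q F` is a gauge transform of the Gauss function `F = ₂F₁(a, b; c; t)`. With
`L = p/t - q/(1-t)` the logarithmic derivative of the gauge factor, `τ' = t^p (1-t)^q (F' + L F)`
and `τ'' = t^p (1-t)^q (F'' + 2 L F' + (L² + L') F)`, so after eliminating `F''` with the Gauss
equation `t(1-t) F'' + (c - (a+b+1) t) F' - a b F = 0` the stated equation is an identity of
rational functions in `t`. The Gauss equation is the coefficient recurrence
`(n+1)(n+c) dₙ₊₁ = (n+a)(n+b) dₙ` summed against `tⁿ`; termwise differentiation is legitimate on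
`(-1, 1)` because the series has radius of convergence at least `1`.
-/

open Set Filter Topology FormalMultilinearSeries

noncomputable def derivCoeff (c : ℕ → ℝ) (n : ℕ) : ℝ := (n + 1) * c (n + 1)

section PowerSeries

variable {c : ℕ → ℝ}

lemma summable_abs_mul_pow_of_one_le_radius (hc : 1 ≤ (ofScalars ℝ c).radius) {r : ℝ}
    (hr₀ : 0 ≤ r) (hr : r < 1) : Summable fun n => |c n| * r ^ n := by
  lift r to NNReal using hr₀
  have hr' : (r : ENNReal) < (ofScalars ℝ c).radius :=
    (ENNReal.coe_lt_one_iff.mpr (mod_cast hr)).trans_le hc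
  simpa [ofScalars_norm] using (ofScalars ℝ c).summable_norm_mul_pow hr'

lemma one_le_radius_derivCoeff (hc : 1 ≤ (ofScalars ℝ c).radius) :
    1 ≤ (ofScalars ℝ (derivCoeff c)).radius := by
  refine ENNReal.le_of_forall_nnreal_lt fun r hr => ?_
  refine (ofScalars ℝ (derivCoeff c)).le_radius_of_summable_norm ?_
  have hr₁ : (r : ℝ) < 1 := mod_cast ENNReal.coe_lt_one_iff.mp hr
  obtain ⟨s, hrs, hs₁⟩ := exists_between hr₁
  have hs₀ : 0 < s := r.coe_nonneg.trans_lt hrs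
  have hq₀ : 0 ≤ r / s := by positivity
  have hq₁ : r / s < 1 := (div_lt_one hs₀).mpr hrs
  have hlim : Tendsto (fun n : ℕ => ((n : ℝ) + 1) * (r / s) ^ n) atTop (𝓝 0) := by
    simpa [add_mul] using (tendsto_self_mul_const_pow_of_lt_one hq₀ hq₁).add
      (tendsto_pow_atTop_nhds_zero_of_lt_one hq₀ hq₁)
  have hsum : Summable fun n => |c (n + 1)| * s ^ (n + 1) :=
    (summable_nat_add_iff 1).mpr (summable_abs_mul_pow_of_one_le_radius hc hs₀.le hs₁)
  refine hsum.of_norm_bounded_eventually_nat ?_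
  filter_upwards [hlim.eventually (gt_mem_nhds hs₀)] with n hn
  have hpow : (r : ℝ) ^ n = (r / s) ^ n * s ^ n := by
    rw [div_pow, div_mul_cancel₀ _ (by positivity)]
  rw [Real.norm_of_nonneg (by positivity), ofScalars_norm, derivCoeff, Real.norm_eq_abs, abs_mul,
    abs_of_nonneg (by positivity : (0 : ℝ) ≤ n + 1), hpow, pow_succ]
  have := mul_le_mul_of_nonneg_right hn.le (pow_nonneg hs₀.le n)
  nlinarith [abs_nonneg (c (n + 1))]

lemma hasSum_ofScalarsSum (hc : 1 ≤ (ofScalars ℝ c).radius) {x : ℝ} (hx : |x| < 1) :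
    HasSum (fun n => c n * x ^ n) (ofScalarsSum c x) := by
  have hsum : Summable fun n => c n * x ^ n := .of_norm <| by
    simpa [Real.norm_eq_abs, abs_mul, abs_pow] using
      summable_abs_mul_pow_of_one_le_radius hc (abs_nonneg x) hx
  simpa [ofScalars_sum_eq] using hsum.hasSum

lemma hasDerivAt_ofScalarsSum (hc : 1 ≤ (ofScalars ℝ c).radius) {x : ℝ} (hx : |x| < 1) :
    HasDerivAt (ofScalarsSum (E := ℝ) c) (ofScalarsSum (derivCoeff c) x) x := by
  simp only [ofScalarsSum_eq_tsum, smul_eq_mul]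
  obtain ⟨r, hxr, hr₁⟩ := exists_between hx
  have hr₀ : 0 < r := (abs_nonneg x).trans_lt hxr
  have hu : Summable fun n => |c n| * (n * r ^ (n - 1)) := by
    refine (summable_nat_add_iff 1).mp ?_
    simpa [derivCoeff, abs_mul, mul_comm, mul_left_comm, abs_of_pos, Nat.cast_add_one_pos]
      using summable_abs_mul_pow_of_one_le_radius (one_le_radius_derivCoeff hc) hr₀.le hr₁
  have hbound : ∀ n y, y ∈ Ioo (-r) r →
      ‖c n * (n * y ^ (n - 1))‖ ≤ |c n| * (n * r ^ (n - 1)) := by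
    intro n y hy
    rw [Real.norm_eq_abs, abs_mul, abs_mul, Nat.abs_cast, abs_pow]
    gcongr
    exact (abs_lt.mpr hy).le
  have hxt : x ∈ Ioo (-r) r := abs_lt.mp hxr
  have hderiv := hasDerivAt_tsum_of_isPreconnected (g := fun n y => c n * y ^ n) hu isOpen_Ioo
    isPreconnected_Ioo (fun n y _ => (hasDerivAt_pow n y).const_mul (c n)) hbound
    (y₀ := 0) ⟨neg_neg_iff_pos.mpr hr₀, hr₀⟩ ?_ hxt
  · refine hderiv.congr_deriv ?_
    rw [(Summable.of_norm_bounded hu fun n => hbound n x hxt).tsum_eq_zero_add]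
    simp [derivCoeff, mul_comm, mul_left_comm]
  · exact summable_of_ne_finset_zero (s := {0}) fun n hn => by simp_all

lemma hasSum_mul_pow_of_hasSum_succ {b : ℕ → ℝ} {x s : ℝ} (hb : b 0 = 0)
    (h : HasSum (fun n => b (n + 1) * x ^ n) s) : HasSum (fun n => b n * x ^ n) (x * s) := by
  have h' : HasSum (fun n => b (n + 1) * x ^ (n + 1))
      (x * s - ∑ i ∈ Finset.range 1, b i * x ^ i) := by
    simpa [hb, pow_succ', mul_assoc, mul_left_comm] using h.mul_left x
  exact (hasSum_nat_add_iff' 1).mp h'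

end PowerSeries

lemma hypergeometric_ode_of_hasSum {a b c x F F₁ F₂ : ℝ} {d : ℕ → ℝ}
    (hrec : ∀ n : ℕ, (n + 1) * (n + c) * d (n + 1) = (n + a) * (n + b) * d n)
    (h₀ : HasSum (fun n => d n * x ^ n) F)
    (h₁ : HasSum (fun n => derivCoeff d n * x ^ n) F₁)
    (h₂ : HasSum (fun n => derivCoeff (derivCoeff d) n * x ^ n) F₂) :
    x * (1 - x) * F₂ + (c - (a + b + 1) * x) * F₁ - a * b * F = 0 := by
  have hxF₂ : HasSum (fun n => n * derivCoeff d n * x ^ n) (x * F₂) :=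
    hasSum_mul_pow_of_hasSum_succ (b := fun n => n * derivCoeff d n) (by simp) <| by
      convert h₂ using 3 with n
      simp only [derivCoeff]
      push_cast
      ring
  have hxF₁ : HasSum (fun n => n * d n * x ^ n) (x * F₁) :=
    hasSum_mul_pow_of_hasSum_succ (b := fun n => n * d n) (by simp) <| by
      convert h₁ using 3 with n
      simp [derivCoeff]
  have hxxF₂ : HasSum (fun n => (n - 1) * n * d n * x ^ n) (x * (x * F₂)) :=
    hasSum_mul_pow_of_hasSum_succ (b := fun n => (n - 1) * n * d n) (by simp) <| by
      convert hxF₂ using 3 with n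
      simp only [derivCoeff]
      push_cast
      ring
  have hlhs : HasSum (fun n => (n + 1) * (n + c) * d (n + 1) * x ^ n) (x * F₂ + c * F₁) := by
    convert hxF₂.add (h₁.mul_left c) using 2 with n
    simp only [derivCoeff]
    ring
  have hrhs : HasSum (fun n => (n + a) * (n + b) * d n * x ^ n)
      (x * (x * F₂) + (a + b + 1) * (x * F₁) + a * b * F) := by
    convert (hxxF₂.add (hxF₁.mul_left (a + b + 1))).add (h₀.mul_left (a * b)) using 2 with n
    ring
  simp only [hrec] at hlhs
  linear_combination hlhs.unique hrhs

lemma ordinaryHypergeometricCoefficient_succ {𝕂 : Type*} [Field 𝕂] [CharZero 𝕂] (a b c : 𝕂)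
    {n : ℕ} (hn : c + n ≠ 0) :
    (n + 1) * (n + c) * ordinaryHypergeometricCoefficient a b c (n + 1) =
      (n + a) * (n + b) * ordinaryHypergeometricCoefficient a b c n := by
  have e₁ : ((n : 𝕂) + 1) * ((n : 𝕂) + 1)⁻¹ = 1 :=
    mul_inv_cancel₀ (Nat.cast_add_one_ne_zero n)
  have e₂ : ((n : 𝕂) + c) * (c + n)⁻¹ = 1 := by rw [add_comm]; exact mul_inv_cancel₀ hn
  simp only [ordinaryHypergeometricCoefficient, ascPochhammer_succ_eval, Nat.factorial_succ,
    Nat.cast_mul, Nat.cast_add_one, mul_inv]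
  linear_combination (ordinaryHypergeometricCoefficient a b c n * (n + a) * (n + b)) *
    ((n + c) * (c + n)⁻¹ * e₁ + e₂)

lemma ofScalarsSum_ordinaryHypergeometricCoefficient (a b c x : ℝ) :
    ofScalarsSum (ordinaryHypergeometricCoefficient a b c) x = ∑' n : ℕ,
      ((ascPochhammer ℝ n).eval a * (ascPochhammer ℝ n).eval b /
        ((ascPochhammer ℝ n).eval c * (n.factorial : ℝ))) * x ^ n := by
  rw [ofScalars_sum_eq]
  congr! 2 with n
  rw [smul_eq_mul, ordinaryHypergeometricCoefficient]
  ring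

lemma one_le_radius_ordinaryHypergeometricSeries {𝕂 : Type*} (𝔸 : Type*) [RCLike 𝕂]
    [NormedDivisionRing 𝔸] [NormedAlgebra 𝕂 𝔸] (a b c : 𝕂) (hc : ∀ m : ℕ, c ≠ -m) :
    1 ≤ (ordinaryHypergeometricSeries 𝔸 a b c).radius := by
  by_cases hab : ∃ m : ℕ, (m : 𝕂) = -a ∨ (m : 𝕂) = -b
  · obtain ⟨m, ha | hb⟩ := hab
    · rw [← neg_eq_iff_eq_neg.mpr ha, ordinaryHypergeometric_radius_top_of_neg_nat₁]
      exact le_top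
    · rw [← neg_eq_iff_eq_neg.mpr hb, ordinaryHypergeometric_radius_top_of_neg_nat₂]
      exact le_top
  · push Not at hab
    rw [ordinaryHypergeometricSeries_radius_eq_one]
    exact fun m => ⟨(hab m).1, (hab m).2, fun h => hc m (neg_eq_iff_eq_neg.mpr h).symm⟩

theorem hypergeometric_ode_ofScalarsSum (a b : ℝ) {c : ℝ} (hc : ∀ m : ℕ, c ≠ -m) {x : ℝ}
    (hx : |x| < 1) :
    letI d := ordinaryHypergeometricCoefficient a b c
    x * (1 - x) * ofScalarsSum (derivCoeff (derivCoeff d)) x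
      + (c - (a + b + 1) * x) * ofScalarsSum (derivCoeff d) x - a * b * ofScalarsSum d x = 0 := by
  have hd := one_le_radius_ordinaryHypergeometricSeries ℝ a b c hc
  have hd₁ := one_le_radius_derivCoeff hd
  exact hypergeometric_ode_of_hasSum
    (fun n => ordinaryHypergeometricCoefficient_succ a b c fun h => hc n (by linarith))
    (hasSum_ofScalarsSum hd hx) (hasSum_ofScalarsSum hd₁ hx)
    (hasSum_ofScalarsSum (one_le_radius_derivCoeff hd₁) hx)

section Gauge

variable {p q t : ℝ} {τ f : ℝ → ℝ}

lemma hasDerivAt_rpow_mul_one_sub_rpow_mul {f' : ℝ} (ht : t ∈ Ioo 0 1)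
    (hf : HasDerivAt f f' t) :
    HasDerivAt (fun s => s ^ p * (1 - s) ^ q * f s)
      (t ^ p * (1 - t) ^ q * (f' + (p / t - q / (1 - t)) * f t)) t := by
  have ht₀ : 0 < t := ht.1
  have ht₁ : 0 < 1 - t := sub_pos.mpr ht.2
  have hp := Real.hasDerivAt_rpow_const (p := p) (Or.inl ht₀.ne')
  have hq := ((hasDerivAt_id' t).const_sub 1).rpow_const (p := q) (Or.inl ht₁.ne')
  refine ((hp.fun_mul hq).fun_mul hf).congr_deriv ?_
  rw [Real.rpow_sub_one ht₀.ne', Real.rpow_sub_one ht₁.ne']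
  field_simp
  ring

lemma deriv_eq_of_eqOn_rpow_mul_one_sub_rpow_mul {f' : ℝ}
    (hτ : EqOn τ (fun s => s ^ p * (1 - s) ^ q * f s) (Ioo 0 1)) (ht : t ∈ Ioo 0 1)
    (hf : HasDerivAt f f' t) :
    deriv τ t = t ^ p * (1 - t) ^ q * (f' + (p / t - q / (1 - t)) * f t) :=
  ((hasDerivAt_rpow_mul_one_sub_rpow_mul ht hf).congr_of_eventuallyEq
    (hτ.eventuallyEq_of_mem (isOpen_Ioo.mem_nhds ht))).deriv

lemma deriv_deriv_eq_of_eqOn_rpow_mul_one_sub_rpow_mul {f' : ℝ → ℝ} {f'' : ℝ}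
    (hτ : EqOn τ (fun s => s ^ p * (1 - s) ^ q * f s) (Ioo 0 1)) (ht : t ∈ Ioo 0 1)
    (hf : ∀ s ∈ Ioo (0 : ℝ) 1, HasDerivAt f (f' s) s) (hf' : HasDerivAt f' f'' t) :
    deriv (deriv τ) t = t ^ p * (1 - t) ^ q * (f'' + 2 * (p / t - q / (1 - t)) * f' t
      + ((p / t - q / (1 - t)) ^ 2 - p / t ^ 2 - q / (1 - t) ^ 2) * f t) := by
  have hL : HasDerivAt (fun s => p / s - q / (1 - s)) (-p / t ^ 2 - q / (1 - t) ^ 2) t := by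
    have h₁ : HasDerivAt (fun s => p / s) (-p / t ^ 2) t := by
      simpa using (hasDerivAt_const t p).fun_div (hasDerivAt_id' t) ht.1.ne'
    have h₂ : HasDerivAt (fun s => q / (1 - s)) (q / (1 - t) ^ 2) t := by
      simpa using (hasDerivAt_const t q).fun_div ((hasDerivAt_id' t).const_sub 1)
        (sub_pos.mpr ht.2).ne'
    exact (h₁.sub h₂).congr_deriv (by ring)
  rw [deriv_eq_of_eqOn_rpow_mul_one_sub_rpow_mul
    (fun s hs => deriv_eq_of_eqOn_rpow_mul_one_sub_rpow_mul hτ hs (hf s hs)) ht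
    (hf'.add (hL.mul (hf t ht)))]
  ring

end Gauge

/-- with `F` the Gauss hypergeometric series
`₂F₁(θ_0+θ_t+θ_1+1/2, θ_0−θ_t+θ_1+1/2; 1+2θ_1; t)` (here `(x)_k` is the ascending
Pochhammer symbol), the function
`τ(t) = t^{(θ_1+1/2)²−θ_0²−θ_t²}(1−t)^{(θ_0+1/2)²−θ_t²−θ_1²}·F(t)` satisfies on `(0,1)`
the hypergeometric-type linear second-order ODE of the paper (the case `θ_∞ = 1/2`). -/
theorem conformal_block_chazy_ode (θ0 θt θ1 : ℝ)
    (hc : ∀ m : ℕ, 1 + 2 * θ1 ≠ -(m : ℝ))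
    (F : ℝ → ℝ)
    (hF : ∀ t : ℝ, F t = ∑' k : ℕ,
      ((ascPochhammer ℝ k).eval (θ0 + θt + θ1 + 1 / 2) *
          (ascPochhammer ℝ k).eval (θ0 - θt + θ1 + 1 / 2) /
        ((ascPochhammer ℝ k).eval (1 + 2 * θ1) * (Nat.factorial k : ℝ))) * t ^ k)
    (τ : ℝ → ℝ)
    (hτ : ∀ t ∈ Ioo (0 : ℝ) 1,
      τ t = t ^ ((θ1 + 1 / 2) ^ 2 - θ0 ^ 2 - θt ^ 2) *
        (1 - t) ^ ((θ0 + 1 / 2) ^ 2 - θt ^ 2 - θ1 ^ 2) * F t) :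
    ∀ t ∈ Ioo (0 : ℝ) 1,
      deriv (deriv τ) t
        + 2 * ((θ0 ^ 2 - θ1 ^ 2 + θt ^ 2 + 1 / 4) / t
            + (θ1 ^ 2 - θ0 ^ 2 + θt ^ 2 + 1 / 4) / (t - 1)) * deriv τ t
        + (((θ0 + θ1) ^ 2 + θt ^ 2 - 1 / 4) / (t * (t - 1))
            + ((θ0 ^ 2 + θt ^ 2 - (θ1 + 1 / 2) ^ 2) / t
                + (θt ^ 2 + θ1 ^ 2 - (θ0 + 1 / 2) ^ 2) / (t - 1))
              * ((θ0 ^ 2 + θt ^ 2 - (-θ1 + 1 / 2) ^ 2) / t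
                + (θt ^ 2 + θ1 ^ 2 - (-θ0 + 1 / 2) ^ 2) / (t - 1)))
          * τ t = 0 := by
  intro t ht
  set d := ordinaryHypergeometricCoefficient (θ0 + θt + θ1 + 1 / 2) (θ0 - θt + θ1 + 1 / 2)
    (1 + 2 * θ1)
  have hd : 1 ≤ (ofScalars ℝ d).radius := one_le_radius_ordinaryHypergeometricSeries ℝ _ _ _ hc
  have hFd : F = ofScalarsSum d :=
    funext fun x => (hF x).trans (ofScalarsSum_ordinaryHypergeometricCoefficient _ _ _ x).symm
  have hunit : ∀ s ∈ Ioo (0 : ℝ) 1, |s| < 1 := fun s hs => (abs_of_pos hs.1).trans_lt hs.2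
  have hF₁ : ∀ s ∈ Ioo (0 : ℝ) 1, HasDerivAt F (ofScalarsSum (derivCoeff d) s) s :=
    fun s hs => hFd ▸ hasDerivAt_ofScalarsSum hd (hunit s hs)
  have hF₂ := hasDerivAt_ofScalarsSum (one_le_radius_derivCoeff hd) (hunit t ht)
  have hode := hypergeometric_ode_ofScalarsSum (θ0 + θt + θ1 + 1 / 2) (θ0 - θt + θ1 + 1 / 2) hc
    (hunit t ht)
  rw [deriv_deriv_eq_of_eqOn_rpow_mul_one_sub_rpow_mul hτ ht hF₁ hF₂,
    deriv_eq_of_eqOn_rpow_mul_one_sub_rpow_mul hτ ht (hF₁ t ht), hτ t ht, hFd]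
  generalize ofScalarsSum (derivCoeff (derivCoeff d)) t = S₂ at hode ⊢
  generalize ofScalarsSum (derivCoeff d) t = S₁ at hode ⊢
  generalize ofScalarsSum d t = S₀ at hode ⊢
  generalize t ^ _ * (1 - t) ^ _ = g
  have ht₀ : t ≠ 0 := ht.1.ne'
  have ht₁ : 1 - t ≠ 0 := (sub_pos.mpr ht.2).ne'
  have ht₁' : t - 1 ≠ 0 := (sub_neg.mpr ht.2).ne
  have hS₂ : S₂ = (((2 * θ0 + 2 * θ1 + 2) * t - (1 + 2 * θ1)) * S₁
      + (θ0 + θt + θ1 + 1 / 2) * (θ0 - θt + θ1 + 1 / 2) * S₀) / (t * (1 - t)) := by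
    rw [eq_div_iff (mul_ne_zero ht₀ ht₁)]
    linear_combination hode
  rw [hS₂]
  field_simp
  ring
end

section
/- Let a and b be real numbers and define on (0,1) the function τ(t) = t^{2a²}·(1−t)^{−a²−b²+1/16}·((1+√(1−t))/2)^{−4a²+(2b−1/2)²} (real powers of positive real bases). Then σ(t) = t(t−1)·τ'(t)/τ(t) satisfies the σ-form of Painlevé VI with parameters (θ_0,θ_t,θ_1,θ_∞) = (a, a, b, 1/2−b) at every t ∈ (0,1). -/
/-!
Each factor of `τ` is an explicit power, so `σ = t(t-1)τ'/τ` is a rational function of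
`s = √(1-t)`; in fact `σ = B - (A + B + C/2) s² + (C/2) s` with `A, B, C` the three exponents.
Then `σ' = A + B + C/2 - C/(4s)` and `σ'' = -C/(8s³)`, and after the substitution `t = 1 - s²`
the σ-form of Painlevé VI becomes a polynomial identity in `s, a, b`, which holds for
these exponents.
-/

open Set

noncomputable section

def PainleveVISigmaForm (θ₀ θₜ θ₁ θinf t σ σ' σ'' : ℝ) : Prop :=
  (t * (t - 1) * σ'') ^ 2 =
    -2 * Matrix.det
      !![2 * θ₀ ^ 2, t * σ' - σ, σ' + θ₀ ^ 2 + θₜ ^ 2 + θ₁ ^ 2 - θinf ^ 2;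
        t * σ' - σ, 2 * θₜ ^ 2, (t - 1) * σ' - σ;
        σ' + θ₀ ^ 2 + θₜ ^ 2 + θ₁ ^ 2 - θinf ^ 2, (t - 1) * σ' - σ, 2 * θ₁ ^ 2]

theorem hasDerivAt_sqrt_one_sub {x : ℝ} (hx : x < 1) :
    HasDerivAt (fun y : ℝ => √(1 - y)) (-1 / (2 * √(1 - x))) x :=
  ((hasDerivAt_id' x).const_sub 1).sqrt (sub_pos.2 hx).ne'

section TauII

variable (A B C : ℝ)

def tauII (t : ℝ) : ℝ := t ^ A * (1 - t) ^ B * ((1 + √(1 - t)) / 2) ^ C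

def sigmaII (t : ℝ) : ℝ := B - (A + B + C / 2) * (1 - t) + C / 2 * √(1 - t)

variable {A B C}

theorem tauII_pos {x : ℝ} (hx : x ∈ Ioo (0 : ℝ) 1) : 0 < tauII A B C x := by
  obtain ⟨hx0, hx1⟩ := hx
  have h1x : 0 < 1 - x := sub_pos.2 hx1
  unfold tauII
  positivity

theorem hasDerivAt_tauII {x : ℝ} (hx : x ∈ Ioo (0 : ℝ) 1) :
    HasDerivAt (tauII A B C)
      (tauII A B C x * (A / x - B / (1 - x) - C / (2 * √(1 - x) * (1 + √(1 - x))))) x := by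
  obtain ⟨hx0, hx1⟩ := hx
  have h1x : 0 < 1 - x := sub_pos.2 hx1
  have hs : 0 < √(1 - x) := Real.sqrt_pos.2 h1x
  have hu : 0 < (1 + √(1 - x)) / 2 := by positivity
  have hp1 := Real.hasDerivAt_rpow_const (p := A) (Or.inl hx0.ne')
  have hp2 := ((hasDerivAt_id' x).const_sub 1).rpow_const (p := B) (Or.inl h1x.ne')
  have hp3 := (((hasDerivAt_sqrt_one_sub hx1).const_add 1).div_const 2).rpow_const (p := C)
    (Or.inl hu.ne')
  refine ((hp1.mul hp2).mul hp3).congr_deriv ?_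
  simp only [tauII, Pi.mul_apply]
  rw [Real.rpow_sub_one hx0.ne', Real.rpow_sub_one h1x.ne', Real.rpow_sub_one hu.ne']
  field_simp
  ring

theorem mul_deriv_div_tauII {x : ℝ} (hx : x ∈ Ioo (0 : ℝ) 1) :
    x * (x - 1) * deriv (tauII A B C) x / tauII A B C x = sigmaII A B C x := by
  rw [(hasDerivAt_tauII hx).deriv, sigmaII]
  have h1x : 0 < 1 - x := sub_pos.2 hx.2
  have hτ := (tauII_pos (A := A) (B := B) (C := C) hx).ne'
  obtain ⟨s, hs, rfl⟩ : ∃ s : ℝ, 0 < s ∧ x = 1 - s ^ 2 :=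
    ⟨√(1 - x), Real.sqrt_pos.2 h1x, by rw [Real.sq_sqrt h1x.le]; ring⟩
  have hx0 : 1 - s ^ 2 ≠ 0 := hx.1.ne'
  rw [sub_sub_cancel, Real.sqrt_sq hs.le]
  field_simp
  ring

theorem hasDerivAt_sigmaII {x : ℝ} (hx : x < 1) :
    HasDerivAt (sigmaII A B C) (A + B + C / 2 - C / (4 * √(1 - x))) x := by
  have hs : 0 < √(1 - x) := Real.sqrt_pos.2 (sub_pos.2 hx)
  refine ((((hasDerivAt_id' x).const_sub 1).const_mul (A + B + C / 2)).const_sub B |>.add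
    ((hasDerivAt_sqrt_one_sub hx).const_mul (C / 2))).congr_deriv ?_
  field_simp
  ring

theorem hasDerivAt_deriv_sigmaII {x : ℝ} (hx : x < 1) :
    HasDerivAt (deriv (sigmaII A B C)) (-C / (8 * √(1 - x) ^ 3)) x := by
  have hs : 0 < √(1 - x) := Real.sqrt_pos.2 (sub_pos.2 hx)
  have hderiv : deriv (sigmaII A B C) =ᶠ[nhds x]
      fun y => A + B + C / 2 - C / (4 * √(1 - y)) :=
    Filter.eventually_of_mem (Iio_mem_nhds hx) fun y hy => (hasDerivAt_sigmaII hy).deriv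
  refine (((hasDerivAt_const x C).div ((hasDerivAt_sqrt_one_sub hx).const_mul 4)
    (by positivity)).const_sub (A + B + C / 2)).congr_of_eventuallyEq hderiv |>.congr_deriv ?_
  field_simp
  ring

theorem painleveVISigmaForm_sigmaII {a b t : ℝ} (hA : A = 2 * a ^ 2)
    (hB : B = -a ^ 2 - b ^ 2 + 1 / 16) (hC : C = -4 * a ^ 2 + (2 * b - 1 / 2) ^ 2) (ht : t < 1) :
    PainleveVISigmaForm a a b (1 / 2 - b) t (sigmaII A B C t) (deriv (sigmaII A B C) t)
      (deriv (deriv (sigmaII A B C)) t) := by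
  rw [PainleveVISigmaForm, (hasDerivAt_deriv_sigmaII ht).deriv, (hasDerivAt_sigmaII ht).deriv,
    sigmaII, Matrix.det_fin_three]
  simp only [Matrix.of_apply, Matrix.cons_val', Matrix.cons_val_zero, Matrix.cons_val_one,
    Matrix.cons_val_two, Matrix.head_cons, Matrix.head_fin_const, Matrix.tail_cons,
    Matrix.empty_val', Matrix.cons_val_fin_one]
  have h1t : 0 < 1 - t := sub_pos.2 ht
  obtain ⟨s, hs, rfl⟩ : ∃ s : ℝ, 0 < s ∧ t = 1 - s ^ 2 :=
    ⟨√(1 - t), Real.sqrt_pos.2 h1t, by rw [Real.sq_sqrt h1t.le]; ring⟩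
  rw [sub_sub_cancel, Real.sqrt_sq hs.le, hA, hB, hC]
  field_simp
  ring

end TauII

end

/-- the tau function of the algebraic Painlevé VI solution II,
`τ(t) = t^{2a²}(1−t)^{−a²−b²+1/16}((1+√(1−t))/2)^{−4a²+(2b−1/2)²}`, has
`σ(t) = t(t−1)τ'(t)/τ(t)` satisfying the σ-form of Painlevé VI with parameters
`(θ_0,θ_t,θ_1,θ_∞) = (a, a, b, 1/2−b)` on `(0,1)`. -/
theorem algebraic_solution_II_sigma_form (a b : ℝ) (τ : ℝ → ℝ)
    (hτ : ∀ t ∈ Ioo (0 : ℝ) 1,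
      τ t = t ^ (2 * a ^ 2) * (1 - t) ^ (-a ^ 2 - b ^ 2 + 1 / 16) *
        ((1 + Real.sqrt (1 - t)) / 2) ^ (-4 * a ^ 2 + (2 * b - 1 / 2) ^ 2))
    (σ : ℝ → ℝ)
    (hσ : ∀ t : ℝ, σ t = t * (t - 1) * deriv τ t / τ t) :
    ∀ t ∈ Ioo (0 : ℝ) 1,
      (t * (t - 1) * deriv (deriv σ) t) ^ 2 =
        -2 * Matrix.det
          !![2 * a ^ 2, t * deriv σ t - σ t,
              deriv σ t + a ^ 2 + a ^ 2 + b ^ 2 - (1 / 2 - b) ^ 2;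
            t * deriv σ t - σ t, 2 * a ^ 2, (t - 1) * deriv σ t - σ t;
            deriv σ t + a ^ 2 + a ^ 2 + b ^ 2 - (1 / 2 - b) ^ 2,
              (t - 1) * deriv σ t - σ t, 2 * b ^ 2] := by
  intro t ht
  have hτ_eq : EqOn τ (tauII _ _ _) (Ioo 0 1) := hτ
  have hσ_eq : EqOn σ (sigmaII _ _ _) (Ioo 0 1) := fun x hx => by
    rw [hσ, hτ_eq.deriv isOpen_Ioo hx, hτ_eq hx, mul_deriv_div_tauII hx]
  have hσ'_eq := hσ_eq.deriv isOpen_Ioo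
  have hσ''_eq := hσ'_eq.deriv isOpen_Ioo
  have key := painleveVISigmaForm_sigmaII (a := a) (b := b) rfl rfl rfl ht.2
  rwa [← hσ''_eq ht, ← hσ'_eq ht, ← hσ_eq ht] at key
end

section
/- Let a be a real number. For s ∈ (2,∞) define t(s) = (s+1)²(s−2) / ((s−1)²(s+2)) and τ̃(s) = (s−2)^{4a²}·(s−1)^{2a²−7/72}·(s+1)^{−10a²+1/8}·(s+2)^{10a²−1/9} (real powers of positive real bases). Define σ̃(s) = t(s)(t(s)−1)·(τ̃'(s)/τ̃(s))/t'(s). Then for every s ∈ (2,∞) at which t'(s) ≠ 0, writing u = t(s), σ = σ̃(s), σ' = σ̃'(s)/t'(s), and σ'' = (d/ds)(σ̃'(s)/t'(s)) / t'(s), one has (u(u−1)σ'')² = −2·det of the 3×3 matrix with rows (2θ_0², uσ'−σ, σ'+θ_0²+θ_t²+θ_1²−θ_∞²), (uσ'−σ, 2θ_t², (u−1)σ'−σ), (σ'+θ_0²+θ_t²+θ_1²−θ_∞², (u−1)σ'−σ, 2θ_1²), with (θ_0,θ_t,θ_1,θ_∞) = (2a, a, a, 1/3); i.e. the algebraic tau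 function τ̃(s) solves the σ-form of Painlevé VI along the parametrization t = t(s). -/
/-!
On `s > 2` the tau function is a product of real powers of `s - 2, s - 1, s + 1, s + 2`, so its
logarithmic derivative is a sum of simple fractions. Hence `σ̃ = t (t - 1) (log τ̃)' / t'` is a
rational function of `s` and `a`, and so are its first two `t`-derivatives obtained by the chain
rule; after clearing denominators the σ-form of Painlevé VI becomes a polynomial identity in `s`
and `a`.
-/

open Set Filter Topology

theorem logDeriv_fun_rpow_const {f : ℝ → ℝ} {x : ℝ} (e : ℝ) (hf : DifferentiableAt ℝ f x)
    (hx : 0 < f x) : logDeriv (fun y => f y ^ e) x = e * logDeriv f x := by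
  rw [logDeriv_apply, logDeriv_apply, deriv_rpow_const hf (Or.inl hx.ne'),
    Real.rpow_sub_one hx.ne']
  field_simp [(Real.rpow_pos_of_pos hx e).ne']

/-- The σ-form of Painlevé VI at a point `t = u` where `σ` and its first two `t`-derivatives
take the values `σ`, `σ'`, `σ''`. -/
def SigmaFormPVI (θ₀ θₜ θ₁ θinf u σ σ' σ'' : ℝ) : Prop :=
  (u * (u - 1) * σ'') ^ 2 =
    -2 * Matrix.det
      !![2 * θ₀ ^ 2, u * σ' - σ, σ' + θ₀ ^ 2 + θₜ ^ 2 + θ₁ ^ 2 - θinf ^ 2;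
        u * σ' - σ, 2 * θₜ ^ 2, (u - 1) * σ' - σ;
        σ' + θ₀ ^ 2 + θₜ ^ 2 + θ₁ ^ 2 - θinf ^ 2, (u - 1) * σ' - σ, 2 * θ₁ ^ 2]

noncomputable section

namespace SolutionIII

/-! A prime denotes the derivative in `s`; `sigmaT` is the derivative `dσ/dt = σ'/t'`. -/

def t (s : ℝ) : ℝ := (s + 1) ^ 2 * (s - 2) / ((s - 1) ^ 2 * (s + 2))

def t' (s : ℝ) : ℝ := 12 * (s + 1) / ((s - 1) ^ 3 * (s + 2) ^ 2)

def tau (a s : ℝ) : ℝ :=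
  (s - 2) ^ (4 * a ^ 2) * (s - 1) ^ (2 * a ^ 2 - 7 / 72) *
    (s + 1) ^ (-10 * a ^ 2 + 1 / 8) * (s + 2) ^ (10 * a ^ 2 - 1 / 9)

def sigma (a s : ℝ) : ℝ :=
  ((1 / 36 - 2 * a ^ 2) * s ^ 3 - 6 * a ^ 2 * s + 12 * a ^ 2 - 2 / 9) / ((s - 1) ^ 2 * (s + 2))

def sigma' (a s : ℝ) : ℝ :=
  ((24 * a ^ 2 - 1 / 6) * s ^ 2 - (24 * a ^ 2 - 2 / 3) * s - (24 * a ^ 2 - 2 / 3)) /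
    ((s - 1) ^ 3 * (s + 2) ^ 2)

def sigmaT (a s : ℝ) : ℝ :=
  ((2 * a ^ 2 - 1 / 72) * s ^ 2 - (2 * a ^ 2 - 1 / 18) * s - (2 * a ^ 2 - 1 / 18)) / (s + 1)

def sigmaT' (a s : ℝ) : ℝ :=
  ((2 * a ^ 2 - 1 / 72) * s ^ 2 + (4 * a ^ 2 - 1 / 36) * s) / (s + 1) ^ 2

theorem hasDerivAt_t {s : ℝ} (h₂ : s - 1 ≠ 0) (h₄ : s + 2 ≠ 0) : HasDerivAt t (t' s) s := by
  have hnum := (((hasDerivAt_id' s).add_const 1).fun_pow 2).fun_mul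
    ((hasDerivAt_id' s).sub_const 2)
  have hden := (((hasDerivAt_id' s).sub_const 1).fun_pow 2).fun_mul
    ((hasDerivAt_id' s).add_const 2)
  refine (hnum.fun_div hden (by simp [h₂, h₄])).congr_deriv ?_
  unfold t'
  field_simp
  ring

theorem logDeriv_tau (a : ℝ) {s : ℝ} (hs : 2 < s) :
    logDeriv (tau a) s = 4 * a ^ 2 / (s - 2) + (2 * a ^ 2 - 7 / 72) / (s - 1) +
      (-10 * a ^ 2 + 1 / 8) / (s + 1) + (10 * a ^ 2 - 1 / 9) / (s + 2) := by
  have h₁ : 0 < s - 2 := by linarith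
  have h₂ : 0 < s - 1 := by linarith
  have h₃ : 0 < s + 1 := by linarith
  have h₄ : 0 < s + 2 := by linarith
  unfold tau
  rw [logDeriv_mul s ?_ ?_ ?_ ?_, logDeriv_mul s ?_ ?_ ?_ ?_, logDeriv_mul s ?_ ?_ ?_ ?_,
    logDeriv_fun_rpow_const (f := (· - 2)) _ (by fun_prop) h₁,
    logDeriv_fun_rpow_const (f := (· - 1)) _ (by fun_prop) h₂,
    logDeriv_fun_rpow_const (f := (· + 1)) _ (by fun_prop) h₃,
    logDeriv_fun_rpow_const (f := (· + 2)) _ (by fun_prop) h₄]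
  · simp [logDeriv_apply, div_eq_mul_inv]
  all_goals first | positivity | fun_prop (disch := positivity)

theorem sigma_eq (a : ℝ) {s : ℝ} (hs : 2 < s) :
    t s * (t s - 1) * logDeriv (tau a) s / t' s = sigma a s := by
  have h₁ : s - 2 ≠ 0 := by linarith
  have h₂ : s - 1 ≠ 0 := by linarith
  have h₃ : s + 1 ≠ 0 := by linarith
  have h₄ : s + 2 ≠ 0 := by linarith
  rw [logDeriv_tau a hs]
  unfold t t' sigma
  field_simp
  ring

theorem hasDerivAt_sigma (a : ℝ) {s : ℝ} (h₂ : s - 1 ≠ 0) (h₄ : s + 2 ≠ 0) :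
    HasDerivAt (sigma a) (sigma' a s) s := by
  have hnum := ((((hasDerivAt_id' s).fun_pow 3).const_mul (1 / 36 - 2 * a ^ 2)).fun_sub
    ((hasDerivAt_id' s).const_mul (6 * a ^ 2))).add_const (12 * a ^ 2) |>.sub_const (2 / 9)
  have hden := (((hasDerivAt_id' s).sub_const 1).fun_pow 2).fun_mul
    ((hasDerivAt_id' s).add_const 2)
  refine (hnum.fun_div hden (by simp [h₂, h₄])).congr_deriv ?_
  unfold sigma'
  field_simp
  ring

theorem sigma'_div_t' (a : ℝ) {s : ℝ} (h₂ : s - 1 ≠ 0) (h₃ : s + 1 ≠ 0) (h₄ : s + 2 ≠ 0) :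
    sigma' a s / t' s = sigmaT a s := by
  unfold sigma' t' sigmaT
  field_simp
  ring

theorem hasDerivAt_sigmaT (a : ℝ) {s : ℝ} (h₃ : s + 1 ≠ 0) :
    HasDerivAt (sigmaT a) (sigmaT' a s) s := by
  have hnum := ((((hasDerivAt_id' s).fun_pow 2).const_mul (2 * a ^ 2 - 1 / 72)).fun_sub
    ((hasDerivAt_id' s).const_mul (2 * a ^ 2 - 1 / 18))).sub_const (2 * a ^ 2 - 1 / 18)
  refine (hnum.fun_div ((hasDerivAt_id' s).add_const 1) (by simp [h₃])).congr_deriv ?_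
  unfold sigmaT'
  field_simp
  ring

theorem sigmaFormPVI (a : ℝ) {s : ℝ} (h₂ : s - 1 ≠ 0) (h₃ : s + 1 ≠ 0) (h₄ : s + 2 ≠ 0) :
    SigmaFormPVI (2 * a) a a (1 / 3) (t s) (sigma a s) (sigmaT a s) (sigmaT' a s / t' s) := by
  have hp : t s * sigmaT a s - sigma a s =
      ((2 * a ^ 2 - 1 / 72) * s ^ 2 - (4 * a ^ 2 - 1 / 18) * s + 4 * a ^ 2 - 1 / 18) /
        (s - 1) := by
    unfold t sigmaT sigma
    field_simp
    ring
  have hq : (t s - 1) * sigmaT a s - sigma a s =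
      ((2 * a ^ 2 - 1 / 36) * s ^ 2 + 2 * a ^ 2) / ((s - 1) * (s + 1)) := by
    unfold t sigmaT sigma
    field_simp
    ring
  have hr : t s * (t s - 1) * (sigmaT' a s / t' s) =
      ((8 / 3 * a ^ 2 - 1 / 54) * s - (2 / 3 * a ^ 2 - 1 / 216) * s ^ 3) /
        ((s - 1) * (s + 1)) := by
    unfold t sigmaT' t'
    field_simp
    ring
  unfold SigmaFormPVI
  simp only [Matrix.det_fin_three, Matrix.of_apply, Matrix.cons_val', Matrix.cons_val_zero,
    Matrix.cons_val_one, Matrix.cons_val_two, Matrix.head_cons, Matrix.tail_cons,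
    Matrix.empty_val', Matrix.cons_val_fin_one, Matrix.head_fin_const]
  rw [hp, hq, hr]
  unfold sigmaT
  field_simp
  ring

end SolutionIII

end

open SolutionIII in
/-- the algebraic Painlevé VI solution III with parameters
`θ = (2a, a, a, 1/3)`: along the parametrization `t(s) = (s+1)²(s−2)/((s−1)²(s+2))`,
`s ∈ (2,∞)`, the tau function `τ̃(s) = (s−2)^{4a²}(s−1)^{2a²−7/72}(s+1)^{−10a²+1/8}(s+2)^{10a²−1/9}`
solves the σ-form of Painlevé VI, with derivatives in `t` computed by the chain rule
(division by `t'(s)`) at points where `t'(s) ≠ 0`. -/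
theorem algebraic_solution_III_sigma_form (a : ℝ)
    (tf τ : ℝ → ℝ)
    (htf : ∀ s ∈ Ioi (2 : ℝ), tf s = (s + 1) ^ 2 * (s - 2) / ((s - 1) ^ 2 * (s + 2)))
    (hτ : ∀ s ∈ Ioi (2 : ℝ),
      τ s = (s - 2) ^ (4 * a ^ 2) * (s - 1) ^ (2 * a ^ 2 - 7 / 72) *
        (s + 1) ^ (-10 * a ^ 2 + 1 / 8) * (s + 2) ^ (10 * a ^ 2 - 1 / 9))
    (σ : ℝ → ℝ)
    (hσ : ∀ s : ℝ, σ s = tf s * (tf s - 1) * (deriv τ s / τ s) / deriv tf s) :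
    ∀ s ∈ Ioi (2 : ℝ), deriv tf s ≠ 0 →
      (fun (u σv σ' σ'' : ℝ) =>
        (u * (u - 1) * σ'') ^ 2 =
          -2 * Matrix.det
            !![2 * (2 * a) ^ 2, u * σ' - σv,
                σ' + (2 * a) ^ 2 + a ^ 2 + a ^ 2 - (1 / 3 : ℝ) ^ 2;
              u * σ' - σv, 2 * a ^ 2, (u - 1) * σ' - σv;
              σ' + (2 * a) ^ 2 + a ^ 2 + a ^ 2 - (1 / 3 : ℝ) ^ 2,
                (u - 1) * σ' - σv, 2 * a ^ 2])
      (tf s) (σ s) (deriv σ s / deriv tf s)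
      (deriv (fun x => deriv σ x / deriv tf x) s / deriv tf s) := by
  have hne {x : ℝ} (hx : x ∈ Ioi (2 : ℝ)) : x - 1 ≠ 0 ∧ x + 1 ≠ 0 ∧ x + 2 ≠ 0 := by
    rw [mem_Ioi] at hx
    exact ⟨by linarith, by linarith, by linarith⟩
  have ht : EqOn tf t (Ioi 2) := fun x hx => htf x hx
  have hdt : EqOn (deriv tf) t' (Ioi 2) := fun x hx =>
    ((hasDerivAt_t (hne hx).1 (hne hx).2.2).congr_of_eventuallyEq
      (ht.eventuallyEq_of_mem (Ioi_mem_nhds hx))).deriv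
  have hsigma : EqOn σ (sigma a) (Ioi 2) := fun x hx => by
    have hlog : logDeriv τ x = logDeriv (tau a) x :=
      (logDeriv_congr_nhds (EqOn.eventuallyEq_of_mem (fun y hy => hτ y hy)
        (Ioi_mem_nhds hx))).eq_of_nhds
    rw [hσ, ← logDeriv_apply, hlog, hdt hx, ht hx, sigma_eq a hx]
  have hsigmaT : EqOn (fun x => deriv σ x / deriv tf x) (sigmaT a) (Ioi 2) := fun x hx => by
    obtain ⟨h₂, h₃, h₄⟩ := hne hx
    show deriv σ x / deriv tf x = _
    rw [((hasDerivAt_sigma a h₂ h₄).congr_of_eventuallyEq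
      (hsigma.eventuallyEq_of_mem (Ioi_mem_nhds hx))).deriv, hdt hx, sigma'_div_t' a h₂ h₃ h₄]
  intro s hs _
  obtain ⟨h₂, h₃, h₄⟩ := hne hs
  have hsigmaT_s : deriv σ s / deriv tf s = sigmaT a s := hsigmaT hs
  rw [((hasDerivAt_sigmaT a h₃).congr_of_eventuallyEq
      (hsigmaT.eventuallyEq_of_mem (Ioi_mem_nhds hs))).deriv,
    hsigmaT_s, hdt hs, ht hs, hsigma hs]
  exact sigmaFormPVI a h₂ h₃ h₄
end

section
/- Let λ be a Young diagram with row lengths λ_1 ≥ λ_2 ≥ … and column lengths λ'_1 ≥ λ'_2 ≥ …, let d be the number of diagonal boxes of λ (the number of indices i with λ_i ≥ i), and define the Frobenius coordinates p_i = λ_i − i and q_i = λ'_i − i for i = 1,…,d. For a box (i,j) ∈ λ let h_λ(i,j) = λ'_j − i + λ_i − j + 1 be its hook length. Then, as an identity of rational numbers, 1 / ∏_{(i,j)∈λ} h_λ(i,j) = (1 / ∏_{i=1}^{d} (p_i! · q_i!)) · det[ 1/(p_i + q_j + 1) ]_{i,j=1,…,d}. -/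
/-!
Write `p i = μ.arm i i` and `q i = μ.leg i i` for the Frobenius coordinates, `d` for their
number. The hooks of the diagonal boxes partition the diagram. For the diagonal box `i`, the
hook lengths of the boxes `(i, j)` with `j ≥ i`, together with the numbers `p i - p k` for
`i < k < d`, are exactly `{1, …, p i}` together with the numbers `p i + q k + 1` for `i ≤ k < d`
(Frobenius). This, and its transpose for the boxes below the diagonal, give
`∏ h · ∏_{i<k} (p i - p k) (q i - q k) = ∏ (p i)! (q i)! · ∏_{i,k} (p i + q k + 1)`.

Cauchy's determinant `∏_{i,j} (x i + y j) · det [1 / (x i + y j)] = V(x) V(y)` follows by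
multiplying the Vandermonde matrices with the coefficient matrix `E` of the polynomials
`∏_{m ≠ j} (X + y m)`: at the points `x i` this gives the Cauchy matrix up to row scaling,
and at the points `-y i` a diagonal matrix, which shows that `det E = V(y)`.
With `x = p` and `y = q + 1` the two identities give the theorem.
-/

open Finset Polynomial

namespace Matrix

theorem vandermonde_mul_of_coeff_eq_of_eval {R : Type*} [CommRing R] {n : ℕ} (v : Fin n → R)
    (P : Fin n → R[X]) (hP : ∀ j, (P j).natDegree < n) :
    vandermonde v * of (fun (k j : Fin n) => (P j).coeff k) = of fun i j => (P j).eval (v i) := by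
  ext i j
  rw [mul_apply, of_apply, eval_eq_sum_range' (hP j), ← Fin.sum_univ_eq_sum_range]
  exact sum_congr rfl fun k _ => mul_comm _ _

variable {K : Type*} [Field K] {n : ℕ}

theorem natDegree_prod_compl_X_add_C_lt (y : Fin n → K) (j : Fin n) :
    (∏ m ∈ {j}ᶜ, (X + C (y m))).natDegree < n := by
  rw [natDegree_prod _ _ fun m _ => X_add_C_ne_zero (y m)]
  simp only [natDegree_X_add_C, sum_const, smul_eq_mul, mul_one, card_compl, card_singleton,
    Fintype.card_fin]
  have := j.pos
  omega

theorem det_of_coeff_prod_compl_X_add_C {y : Fin n → K} (hy : Function.Injective y) :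
    (of fun (k j : Fin n) => (∏ m ∈ {j}ᶜ, (X + C (y m))).coeff k).det =
      (vandermonde y).det := by
  have hdiag :
      vandermonde (-y) * of (fun (k j : Fin n) => (∏ m ∈ {j}ᶜ, (X + C (y m))).coeff k) =
        diagonal fun j => ∏ m ∈ {j}ᶜ, (y m - y j) := by
    rw [vandermonde_mul_of_coeff_eq_of_eval _ _ (natDegree_prod_compl_X_add_C_lt y)]
    ext i j
    by_cases hij : i = j
    · subst hij
      simp [eval_prod, neg_add_eq_sub]
    · rw [diagonal_apply_ne _ hij, of_apply, eval_prod]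
      exact prod_eq_zero (i := i) (by simpa using hij) (by simp)
  refine mul_left_cancel₀ ((det_vandermonde_ne_zero_iff (v := -y)).2 (neg_injective.comp hy)) ?_
  rw [← det_mul, hdiag, det_diagonal, ← prod_prod_Ioi_mul_eq_prod_prod_off_diag,
    det_vandermonde, det_vandermonde, ← prod_mul_distrib]
  refine prod_congr rfl fun i _ => ?_
  rw [← prod_mul_distrib]
  refine prod_congr rfl fun j _ => ?_
  simp only [Pi.neg_apply]
  ring

theorem det_cauchy (x y : Fin n → K) (hxy : ∀ i j, x i + y j ≠ 0)
    (hy : Function.Injective y) :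
    (∏ i, ∏ j, (x i + y j)) * (of fun i j => (x i + y j)⁻¹).det =
      (vandermonde x).det * (vandermonde y).det := by
  have hx : vandermonde x * of (fun (k j : Fin n) => (∏ m ∈ {j}ᶜ, (X + C (y m))).coeff k) =
      diagonal (fun i => ∏ j, (x i + y j)) * of fun i j => (x i + y j)⁻¹ := by
    rw [vandermonde_mul_of_coeff_eq_of_eval _ _ (natDegree_prod_compl_X_add_C_lt y)]
    ext i j
    rw [diagonal_mul, of_apply, of_apply, ← mul_prod_erase univ _ (mem_univ j),
      mul_right_comm, mul_inv_cancel₀ (hxy i j), one_mul]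
    simp [eval_prod, compl_eq_univ_sdiff, sdiff_singleton_eq_erase]
  have := congrArg det hx
  rw [det_mul, det_mul, det_diagonal, det_of_coeff_prod_compl_X_add_C hy] at this
  exact this.symm

end Matrix

theorem Finset.prod_prod_Ici_mul_prod_prod_Ioi {α M : Type*} [CommMonoid M] [Fintype α]
    [LinearOrder α] [LocallyFiniteOrderTop α] [LocallyFiniteOrderBot α] (f : α → α → M) :
    (∏ i, ∏ j ∈ Ici i, f i j) * ∏ i, ∏ j ∈ Ioi i, f j i = ∏ i, ∏ j, f i j := by
  calc _ = (∏ i, f i i) * ∏ i, ∏ j ∈ Ioi i, (f i j * f j i) := by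
        simp only [← mul_prod_Ioi_eq_prod_Ici, prod_mul_distrib, mul_assoc]
    _ = _ := by
        rw [prod_prod_Ioi_mul_eq_prod_prod_off_diag fun j i => f i j, ← prod_mul_distrib]
        exact prod_congr rfl fun i _ => (Fintype.prod_eq_mul_prod_compl i _).symm

theorem Finset.disjoint_Ico_one_image_add_one {ι : Type*} [DecidableEq ι] (a : ℕ)
    (s : Finset ι) (f : ι → ℕ) : Disjoint (Ico 1 (a + 1)) (s.image fun k => a + f k + 1) :=
  disjoint_left.2 fun x hx hx' => by
    obtain ⟨k, -, rfl⟩ := mem_image.1 hx'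
    simp at hx

theorem Fin.prod_Ioi_eq_prod_Ioo {M : Type*} [CommMonoid M] {n : ℕ} (i : Fin n) (f : ℕ → M) :
    ∏ k ∈ Ioi i, f k = ∏ k ∈ Ioo (i : ℕ) n, f k := by
  rw [← Fin.map_valEmbedding_Ioi, prod_map]
  rfl

theorem Fin.prod_Ici_eq_prod_Ico {M : Type*} [CommMonoid M] {n : ℕ} (i : Fin n) (f : ℕ → M) :
    ∏ k ∈ Ici i, f k = ∏ k ∈ Ico (i : ℕ) n, f k := by
  rw [← Fin.map_valEmbedding_Ici, prod_map]
  rfl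

namespace YoungDiagram

variable (μ : YoungDiagram)

def frobeniusRank : ℕ := (μ.cells.filter fun c => c.1 = c.2).card

def arm (i j : ℕ) : ℕ := μ.rowLen i - (j + 1)

def leg (i j : ℕ) : ℕ := μ.colLen j - (i + 1)

def hookLength (i j : ℕ) : ℕ := μ.arm i j + μ.leg i j + 1

@[simp] theorem arm_transpose (i j : ℕ) : μ.transpose.arm i j = μ.leg j i := by
  rw [arm, leg, rowLen_transpose]

@[simp] theorem leg_transpose (i j : ℕ) : μ.transpose.leg i j = μ.arm j i := by
  rw [arm, leg, colLen_transpose]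

@[simp] theorem hookLength_transpose (i j : ℕ) :
    μ.transpose.hookLength i j = μ.hookLength j i := by
  rw [hookLength, hookLength, arm_transpose, leg_transpose, add_comm (μ.leg j i)]

theorem mk_mem_iff_lt_frobeniusRank (i : ℕ) : (i, i) ∈ μ ↔ i < μ.frobeniusRank := by
  set T := (μ.cells.filter fun c => c.1 = c.2).image Prod.fst
  have hT : (T : Set ℕ) = {k | (k, k) ∈ μ} := by
    ext k
    simp only [T, coe_image, coe_filter, mem_cells, Set.mem_image, Set.mem_ofPred_eq]
    constructor
    · rintro ⟨⟨a, b⟩, ⟨hab, rfl : a = b⟩, rfl⟩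
      exact hab
    · exact fun hk => ⟨(k, k), ⟨hk, rfl⟩, rfl⟩
  have hcard : T.card = μ.frobeniusRank :=
    card_image_of_injOn fun c hc c' hc' h => Prod.ext h <| by
      simp only [coe_filter, Set.mem_ofPred_eq] at hc hc'
      rw [← hc.2, ← hc'.2, h]
  have hlower : IsLowerSet (T : Set ℕ) := by
    rw [hT]
    exact fun a b hba hb => μ.up_left_mem hba hba hb
  obtain hTuniv | ⟨a, hTa⟩ := hlower.eq_univ_or_Iio
  · exact absurd (hTuniv ▸ T.finite_toSet) Set.infinite_univ
  · have hTa' : T = range a := by rw [← coe_inj, hTa, coe_range]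
    rw [← hcard, hTa', card_range, ← mem_range, ← hTa', ← mem_coe, hT, Set.mem_ofPred_eq]

@[simp] theorem frobeniusRank_transpose : μ.transpose.frobeniusRank = μ.frobeniusRank :=
  eq_of_forall_lt_iff fun k => by simp [← mk_mem_iff_lt_frobeniusRank]

variable {μ}

theorem lt_rowLen_of_lt_frobeniusRank {i : ℕ} (hi : i < μ.frobeniusRank) : i < μ.rowLen i :=
  mem_iff_lt_rowLen.1 ((μ.mk_mem_iff_lt_frobeniusRank i).2 hi)

theorem lt_colLen_of_lt_frobeniusRank {i : ℕ} (hi : i < μ.frobeniusRank) : i < μ.colLen i :=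
  mem_iff_lt_colLen.1 ((μ.mk_mem_iff_lt_frobeniusRank i).2 hi)

theorem colLen_le_of_frobeniusRank_le {j : ℕ} (hj : μ.frobeniusRank ≤ j) : μ.colLen j ≤ j :=
  not_lt.1 fun h => hj.not_gt ((μ.mk_mem_iff_lt_frobeniusRank j).1 (mem_iff_lt_colLen.2 h))

theorem hookLength_eq_of_mem {c : ℕ × ℕ} (h : c ∈ μ) :
    μ.hookLength c.1 c.2 = μ.colLen c.2 - c.1 + (μ.rowLen c.1 - c.2) - 1 := by
  have := mem_iff_lt_rowLen.1 h
  have := mem_iff_lt_colLen.1 h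
  simp only [hookLength, arm, leg]
  omega

theorem hookLength_eq_of_lt_frobeniusRank {i j : ℕ} (hij : i ≤ j) (hj : j < μ.rowLen i)
    (hjd : j < μ.frobeniusRank) : μ.hookLength i j = μ.arm i i + μ.leg j j + 1 := by
  have := lt_colLen_of_lt_frobeniusRank hjd
  simp only [hookLength, arm, leg]
  omega

theorem hookLength_le_arm_of_frobeniusRank_le {i j : ℕ} (hj : j < μ.rowLen i)
    (hjd : μ.frobeniusRank ≤ j) : μ.hookLength i j ≤ μ.arm i i := by
  have := colLen_le_of_frobeniusRank_le hjd
  have := mem_iff_lt_colLen.1 (mem_iff_lt_rowLen.2 hj)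
  simp only [hookLength, arm, leg]
  omega

variable (μ)

theorem strictAntiOn_arm_diag :
    StrictAntiOn (fun k => μ.arm k k) (Set.Iio μ.frobeniusRank) := fun k _ l hl hkl => by
  have := μ.rowLen_anti k l hkl.le
  have := lt_rowLen_of_lt_frobeniusRank (Set.mem_Iio.1 hl)
  simp only [arm]
  omega

theorem strictAntiOn_leg_diag :
    StrictAntiOn (fun k => μ.leg k k) (Set.Iio μ.frobeniusRank) := by
  simpa using μ.transpose.strictAntiOn_arm_diag

theorem injOn_hookLength_row (i : ℕ) : Set.InjOn (μ.hookLength i) (Ico i (μ.rowLen i)) :=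
  StrictAntiOn.injOn fun j₁ _ j₂ hj₂ hj => by
    have := μ.colLen_anti j₁ j₂ hj.le
    have := (mem_Ico.1 hj₂).2
    simp only [hookLength, arm, leg]
    omega

theorem injOn_arm_diag_sub_arm_diag (i : ℕ) :
    Set.InjOn (fun k => μ.arm i i - μ.arm k k) (Ioo i μ.frobeniusRank) := fun a ha b hb hab => by
  obtain ⟨hia, ha⟩ := mem_Ioo.1 ha
  obtain ⟨hib, hb⟩ := mem_Ioo.1 hb
  have : μ.arm a a < μ.arm i i := μ.strictAntiOn_arm_diag (hia.trans ha) ha hia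
  have : μ.arm b b < μ.arm i i := μ.strictAntiOn_arm_diag (hib.trans hb) hb hib
  refine μ.strictAntiOn_arm_diag.injOn ha hb ?_
  simp only at hab ⊢
  omega

theorem injOn_arm_diag_add_leg_diag (i : ℕ) :
    Set.InjOn (fun k => μ.arm i i + μ.leg k k + 1) (Ico i μ.frobeniusRank) :=
  fun a ha b hb hab =>
    μ.strictAntiOn_leg_diag.injOn (mem_Ico.1 ha).2 (mem_Ico.1 hb).2 (by simpa using hab)

theorem disjoint_image_hookLength_row_image_arm_diag_sub (i : ℕ) :
    Disjoint ((Ico i (μ.rowLen i)).image (μ.hookLength i))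
      ((Ioo i μ.frobeniusRank).image fun k => μ.arm i i - μ.arm k k) := by
  simp only [disjoint_left, mem_image, mem_Ico, mem_Ioo, not_exists, not_and]
  rintro _ ⟨j, ⟨-, hj⟩, rfl⟩ k ⟨hik, hk⟩
  have := μ.rowLen_anti i k hik.le
  have := lt_rowLen_of_lt_frobeniusRank hk
  have := (@mem_iff_lt_rowLen μ k j).symm.trans mem_iff_lt_colLen
  have := mem_iff_lt_colLen.1 (mem_iff_lt_rowLen.2 hj)
  simp only [hookLength, arm, leg]
  omega

variable {μ}

theorem image_hookLength_row_union_image_arm_diag_sub {i : ℕ} (hi : i < μ.frobeniusRank) :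
    (Ico i (μ.rowLen i)).image (μ.hookLength i) ∪
        (Ioo i μ.frobeniusRank).image (fun k => μ.arm i i - μ.arm k k) =
      Ico 1 (μ.arm i i + 1) ∪
        (Ico i μ.frobeniusRank).image (fun k => μ.arm i i + μ.leg k k + 1) := by
  refine eq_of_subset_of_card_le ?_ ?_
  · simp only [subset_iff, mem_union, mem_image, mem_Ico, mem_Ioo]
    rintro _ (⟨j, ⟨hij, hj⟩, rfl⟩ | ⟨k, ⟨hik, hk⟩, rfl⟩)
    · by_cases hjd : j < μ.frobeniusRank
      · exact Or.inr ⟨j, ⟨hij, hjd⟩, (hookLength_eq_of_lt_frobeniusRank hij hj hjd).symm⟩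
      · have := hookLength_le_arm_of_frobeniusRank_le hj (not_lt.1 hjd)
        exact Or.inl ⟨by simp [hookLength], by omega⟩
    · have : μ.arm k k < μ.arm i i := μ.strictAntiOn_arm_diag (hik.trans hk) hk hik
      exact Or.inl ⟨by omega, by omega⟩
  · have := lt_rowLen_of_lt_frobeniusRank hi
    rw [card_union_of_disjoint (μ.disjoint_image_hookLength_row_image_arm_diag_sub i),
      card_union_of_disjoint (disjoint_Ico_one_image_add_one _ _ _),
      card_image_of_injOn (μ.injOn_hookLength_row i),
      card_image_of_injOn (μ.injOn_arm_diag_sub_arm_diag i),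
      card_image_of_injOn (μ.injOn_arm_diag_add_leg_diag i)]
    simp only [Nat.card_Ico, Nat.card_Ioo, arm]
    omega

theorem prod_hookLength_row_mul {i : ℕ} (hi : i < μ.frobeniusRank) :
    (∏ j ∈ Ico i (μ.rowLen i), μ.hookLength i j) *
        ∏ k ∈ Ioo i μ.frobeniusRank, (μ.arm i i - μ.arm k k) =
      (μ.arm i i).factorial * ∏ k ∈ Ico i μ.frobeniusRank, (μ.arm i i + μ.leg k k + 1) := by
  have h := congrArg (∏ x ∈ ·, x) (image_hookLength_row_union_image_arm_diag_sub hi)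
  rwa [prod_union (μ.disjoint_image_hookLength_row_image_arm_diag_sub i),
    prod_union (disjoint_Ico_one_image_add_one _ _ _), prod_image (μ.injOn_hookLength_row i),
    prod_image (μ.injOn_arm_diag_sub_arm_diag i), prod_image (μ.injOn_arm_diag_add_leg_diag i),
    prod_Ico_id_eq_factorial] at h

theorem prod_hookLength_col_mul {i : ℕ} (hi : i < μ.frobeniusRank) :
    (∏ k ∈ Ioo i (μ.colLen i), μ.hookLength k i) *
        ∏ k ∈ Ioo i μ.frobeniusRank, (μ.leg i i - μ.leg k k) =
      (μ.leg i i).factorial * ∏ k ∈ Ioo i μ.frobeniusRank, (μ.arm k k + μ.leg i i + 1) := by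
  have h := μ.transpose.prod_hookLength_row_mul (i := i) (by simpa using hi)
  simp only [rowLen_transpose, frobeniusRank_transpose, arm_transpose, leg_transpose,
    hookLength_transpose] at h
  rw [← mul_prod_Ioo_eq_prod_Ico (lt_colLen_of_lt_frobeniusRank hi),
    ← mul_prod_Ioo_eq_prod_Ico hi, mul_assoc, mul_left_comm _ (_ + _ + 1)] at h
  simp only [add_comm (μ.leg i i)] at h
  exact Nat.eq_of_mul_eq_mul_left (Nat.succ_pos _) h

variable (μ)

theorem prod_cells_eq_prod_diagonal_hooks {M : Type*} [CommMonoid M] (f : ℕ → ℕ → M) :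
    ∏ c ∈ μ.cells, f c.1 c.2 =
      (∏ i ∈ range μ.frobeniusRank, ∏ j ∈ Ico i (μ.rowLen i), f i j) *
        ∏ i ∈ range μ.frobeniusRank, ∏ k ∈ Ioo i (μ.colLen i), f k i := by
  rw [← prod_filter_mul_prod_filter_not μ.cells fun c => c.1 ≤ c.2]
  congr 1
  · refine prod_finset_product' _ _ _ fun ⟨a, b⟩ => ?_
    simp only [mem_filter, mem_cells, mem_range, mem_Ico, ← mem_iff_lt_rowLen,
      ← mk_mem_iff_lt_frobeniusRank]
    exact ⟨fun h => ⟨μ.up_left_mem le_rfl h.2 h.1, h.2, h.1⟩, fun h => ⟨h.2.2, h.2.1⟩⟩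
  · refine prod_finset_product_right' _ _ _ fun ⟨a, b⟩ => ?_
    simp only [mem_filter, mem_cells, mem_range, mem_Ioo, not_le, ← mem_iff_lt_colLen,
      ← mk_mem_iff_lt_frobeniusRank]
    exact ⟨fun h => ⟨μ.up_left_mem h.2.le le_rfl h.1, h.2, h.1⟩,
      fun h => ⟨h.2.2, h.2.1⟩⟩

theorem prod_hookLength_mul_prod_sub_mul_sub :
    (∏ c ∈ μ.cells, μ.hookLength c.1 c.2) *
        ∏ i : Fin μ.frobeniusRank, ∏ k ∈ Ioi i,
          ((μ.arm i i - μ.arm k k) * (μ.leg i i - μ.leg k k)) =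
      (∏ i : Fin μ.frobeniusRank, (μ.arm i i).factorial * (μ.leg i i).factorial) *
        ∏ i : Fin μ.frobeniusRank, ∏ k : Fin μ.frobeniusRank,
          (μ.arm i i + μ.leg k k + 1) := by
  set d := μ.frobeniusRank
  have hrow (i : Fin d) :
      (∏ j ∈ Ico (i : ℕ) (μ.rowLen i), μ.hookLength i j) *
          ∏ k ∈ Ioi i, (μ.arm i i - μ.arm k k) =
        (μ.arm i i).factorial * ∏ k ∈ Ici i, (μ.arm i i + μ.leg k k + 1) := by
    rw [Fin.prod_Ioi_eq_prod_Ioo i fun k => μ.arm i i - μ.arm k k,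
      Fin.prod_Ici_eq_prod_Ico i fun k => μ.arm i i + μ.leg k k + 1]
    exact prod_hookLength_row_mul i.isLt
  have hcol (i : Fin d) :
      (∏ k ∈ Ioo (i : ℕ) (μ.colLen i), μ.hookLength k i) *
          ∏ k ∈ Ioi i, (μ.leg i i - μ.leg k k) =
        (μ.leg i i).factorial * ∏ k ∈ Ioi i, (μ.arm k k + μ.leg i i + 1) := by
    rw [Fin.prod_Ioi_eq_prod_Ioo i fun k => μ.leg i i - μ.leg k k,
      Fin.prod_Ioi_eq_prod_Ioo i fun k => μ.arm k k + μ.leg i i + 1]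
    exact prod_hookLength_col_mul i.isLt
  rw [prod_cells_eq_prod_diagonal_hooks μ μ.hookLength,
    ← Fin.prod_univ_eq_prod_range (fun i => ∏ j ∈ Ico i (μ.rowLen i), μ.hookLength i j),
    ← Fin.prod_univ_eq_prod_range (fun i => ∏ k ∈ Ioo i (μ.colLen i), μ.hookLength k i),
    ← prod_prod_Ici_mul_prod_prod_Ioi]
  calc _ = (∏ i : Fin d, (∏ j ∈ Ico (i : ℕ) (μ.rowLen i), μ.hookLength i j) *
          ∏ k ∈ Ioi i, (μ.arm i i - μ.arm k k)) *
        ∏ i : Fin d, (∏ k ∈ Ioo (i : ℕ) (μ.colLen i), μ.hookLength k i) *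
          ∏ k ∈ Ioi i, (μ.leg i i - μ.leg k k) := by
        simp only [prod_mul_distrib]
        ring
    _ = _ := by
        simp only [hrow, hcol, prod_mul_distrib]
        ring

theorem det_vandermonde_arm_diag_mul_det_vandermonde_leg_diag {R : Type*} [CommRing R] :
    (Matrix.vandermonde fun i : Fin μ.frobeniusRank => (μ.arm i i : R)).det *
        (Matrix.vandermonde fun i : Fin μ.frobeniusRank => (μ.leg i i : R)).det =
      ((∏ i : Fin μ.frobeniusRank, ∏ k ∈ Ioi i,
        ((μ.arm i i - μ.arm k k) * (μ.leg i i - μ.leg k k)) : ℕ) : R) := by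
  rw [Matrix.det_vandermonde, Matrix.det_vandermonde, ← prod_mul_distrib, Nat.cast_prod]
  refine prod_congr rfl fun i _ => ?_
  rw [← prod_mul_distrib, Nat.cast_prod]
  refine prod_congr rfl fun k hk => ?_
  have hik : i ≤ k := (mem_Ioi.1 hk).le
  rw [Nat.cast_mul, Nat.cast_sub (μ.strictAntiOn_arm_diag.antitoneOn i.isLt k.isLt hik),
    Nat.cast_sub (μ.strictAntiOn_leg_diag.antitoneOn i.isLt k.isLt hik)]
  ring

theorem inv_prod_hookLength_eq_det {K : Type*} [Field K] [CharZero K] :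
    (∏ c ∈ μ.cells, (μ.hookLength c.1 c.2 : K))⁻¹ =
      (∏ i : Fin μ.frobeniusRank, ((μ.arm i i).factorial : K) * (μ.leg i i).factorial)⁻¹ *
        (Matrix.of fun i j : Fin μ.frobeniusRank =>
          ((μ.arm i i : K) + μ.leg j j + 1)⁻¹).det := by
  have hne (a b : ℕ) : (a : K) + b + 1 ≠ 0 := by exact_mod_cast Nat.succ_ne_zero (a + b)
  have hook := congrArg (Nat.cast : ℕ → K) μ.prod_hookLength_mul_prod_sub_mul_sub
  have cauchy := Matrix.det_cauchy (fun i : Fin _ => (μ.arm i i : K))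
    (fun j => (μ.leg j j : K) + 1) (fun i j => by simpa only [add_assoc] using hne _ _)
    fun a b hab => Fin.ext (μ.strictAntiOn_leg_diag.injOn a.isLt b.isLt (by simpa using hab))
  rw [Matrix.det_vandermonde_add, det_vandermonde_arm_diag_mul_det_vandermonde_leg_diag] at cauchy
  simp only [← add_assoc] at cauchy
  push_cast at hook cauchy
  set d := μ.frobeniusRank
  set H := ∏ c ∈ μ.cells, (μ.hookLength c.1 c.2 : K)
  set F := ∏ i : Fin d, ((μ.arm i i).factorial : K) * (μ.leg i i).factorial
  set P := ∏ i : Fin d, ∏ j : Fin d, ((μ.arm i i : K) + μ.leg j j + 1)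
  set C := (Matrix.of fun i j : Fin d => ((μ.arm i i : K) + μ.leg j j + 1)⁻¹).det
  have hF : F ≠ 0 := prod_ne_zero_iff.2 fun i _ =>
    mul_ne_zero (Nat.cast_ne_zero.2 (Nat.factorial_ne_zero _))
      (Nat.cast_ne_zero.2 (Nat.factorial_ne_zero _))
  have hP : P ≠ 0 := prod_ne_zero_iff.2 fun i _ => prod_ne_zero_iff.2 fun j _ => hne _ _
  have hHC : H * C = F := mul_left_cancel₀ hP (by linear_combination H * cauchy + hook)
  have hC : C ≠ 0 := right_ne_zero_of_mul (hHC ▸ hF)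
  rw [← hHC]
  field_simp

end YoungDiagram

/-- the determinantal identity for the product of hook lengths of a
Young diagram `Y` in terms of its Frobenius coordinates.  Cells are 0-indexed, so the
hook length of a cell `c = (i,j) ∈ Y` is `(colLen j − i) + (rowLen i − j) − 1`, the
number `d` of diagonal boxes is the number of cells with `i = j`, and the Frobenius
coordinates are `p i = rowLen i − (i+1)`, `q i = colLen i − (i+1)` for `i = 0, …, d−1`. -/
theorem hook_length_frobenius_det (Y : YoungDiagram) (d : ℕ)
    (hd : d = (Y.cells.filter fun c => c.1 = c.2).card)
    (p q : Fin d → ℕ)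
    (hp : ∀ i : Fin d, p i = Y.rowLen i - (i + 1))
    (hq : ∀ i : Fin d, q i = Y.colLen i - (i + 1)) :
    (∏ c ∈ Y.cells,
        (((Y.colLen c.2 - c.1) + (Y.rowLen c.1 - c.2) - 1 : ℕ) : ℚ))⁻¹ =
      (∏ i : Fin d, ((Nat.factorial (p i) : ℚ) * (Nat.factorial (q i) : ℚ)))⁻¹ *
        Matrix.det (Matrix.of fun i j : Fin d => ((p i : ℚ) + (q j : ℚ) + 1)⁻¹) := by
  obtain rfl : d = Y.frobeniusRank := hd
  obtain rfl : p = fun i : Fin _ => Y.arm i i := funext hp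
  obtain rfl : q = fun i : Fin _ => Y.leg i i := funext hq
  rw [← Y.inv_prod_hookLength_eq_det]
  exact congrArg _ <| prod_congr rfl fun c hc => by
    rw [Y.hookLength_eq_of_mem ((Y.mem_cells c).1 hc)]
end
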